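/- arXiv:1903.07494 — 4 statements merged into one kernel-verified Lean document; each statement's English description precedes it below -/
import Mathlib

section
/- Let W be a unitary operator on a complex Hilbert space H such that 1 and −1 lie in essential gaps of W, let H_C be a finite-dimensional subspace which is cyclic for W, and let f be the Schur function of H_C with respect to W (so f(±1) exist and are unitary on H_C). Then +1 is an eigenvalue of W if and only if +1 is an eigenvalue of f(1), and −1 is an eigenvalue of W if and only if −1 is an eigenvalue of f(−1). -/
set_option maxHeartbeats 1000000


open Complex Filter Set Metric

variable {H : Type*} [NormedAddCommGroup H] [InnerProductSpace ℂ H] [CompleteSpace H]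

/-- The orthogonal projection of `H` onto `K`, as an operator on `H`. -/
noncomputable def orthProj (K : Submodule ℂ H) [Submodule.HasOrthogonalProjection K] : H →L[ℂ] H :=
  K.subtypeL ∘L K.orthogonalProjectionOnto

/-- The Schur function of the subspace `K` with respect to the operator `W`,
`f(z) = P_C (W - z P_C^⊥)⁻¹ P_C`, with values regarded as operators on `K`.
(For `z` in the open unit disk and `W` unitary, `W - z P_C^⊥` is invertible,
so `Ring.inverse` gives the genuine inverse there.) -/
noncomputable def schurAt (W : H →L[ℂ] H) (K : Submodule ℂ H) [Submodule.HasOrthogonalProjection K]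
    (z : ℂ) : K →L[ℂ] K :=
  K.orthogonalProjectionOnto ∘L Ring.inverse (W - z • (1 - orthProj K)) ∘L K.subtypeL

/-- The cyclic subspace generated by `K` with respect to `W`: the closure of the span of
all `Wⁿ K`, `n ∈ ℤ` (for unitary `W`, negative powers are powers of `star W`). -/
noncomputable def cyclicSubspace (W : H →L[ℂ] H) (K : Submodule ℂ H) : Submodule ℂ H :=
  (⨆ n : ℕ, Submodule.map ((W ^ n : H →L[ℂ] H) : H →ₗ[ℂ] H) K ⊔ Submodule.map (((star W) ^ n : H →L[ℂ] H) : H →ₗ[ℂ] H) K).topologicalClosure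

/-- An open arc of the unit circle. -/
def IsOpenArc (Γ : Set ℂ) : Prop :=
  ∃ a b : ℝ, a < b ∧ b - a < 2 * Real.pi ∧
    Γ = (fun θ : ℝ => Complex.exp (θ * Complex.I)) '' Set.Ioo a b

/-- `lam` lies in an essential gap of `W`: some open arc of the unit circle containing
`lam` meets the spectrum of `W` only in isolated eigenvalues of finite multiplicity. -/
def InEssentialGap (W : H →L[ℂ] H) (lam : ℂ) : Prop :=
  ∃ Γ : Set ℂ, IsOpenArc Γ ∧ lam ∈ Γ ∧
    ∀ μ ∈ Γ ∩ spectrum ℂ W,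
      (∃ U : Set ℂ, IsOpen U ∧ μ ∈ U ∧ U ∩ spectrum ℂ W ⊆ {μ}) ∧
      LinearMap.ker ((W - μ • (1 : H →L[ℂ] H) : H →L[ℂ] H) : H →ₗ[ℂ] H) ≠ ⊥ ∧
      FiniteDimensional ℂ (LinearMap.ker ((W - μ • (1 : H →L[ℂ] H) : H →L[ℂ] H) : H →ₗ[ℂ] H))

section Aux

variable (K : Submodule ℂ H) [Submodule.HasOrthogonalProjection K]

lemma orthProj_apply (x : H) : orthProj K x = (K.orthogonalProjectionOnto x : H) := rfl

lemma orthProj_mem (x : H) : orthProj K x ∈ K := (K.orthogonalProjectionOnto x).2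

lemma orthProj_eq_self {x : H} (hx : x ∈ K) : orthProj K x = x := by
  have := K.orthogonalProjectionOnto_mem_subspace_eq_self ⟨x, hx⟩
  simpa [orthProj_apply] using congrArg (Submodule.subtype K) this

lemma orthProj_inner_sub (x : H) {w : H} (hw : w ∈ K) :
    (inner ℂ w (x - orthProj K x) : ℂ) = 0 := by
  have h : x - orthProj K x ∈ Kᗮ := K.sub_starProjection_mem_orthogonal x
  exact (Submodule.mem_orthogonal K _).1 h w hw

lemma orthProj_pythagoras (x : H) :
    ‖x‖ ^ 2 = ‖orthProj K x‖ ^ 2 + ‖x - orthProj K x‖ ^ 2 := by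
  have h0 : (inner ℂ (orthProj K x) (x - orthProj K x) : ℂ) = 0 :=
    orthProj_inner_sub K x (orthProj_mem K x)
  have := norm_add_sq_eq_norm_sq_add_norm_sq_of_inner_eq_zero
    (orthProj K x) (x - orthProj K x) h0
  simpa [add_sub_cancel, pow_two] using this

lemma norm_sub_orthProj_le (x : H) : ‖x - orthProj K x‖ ≤ ‖x‖ := by
  have h := orthProj_pythagoras K x
  nlinarith [norm_nonneg (x - orthProj K x), norm_nonneg x, norm_nonneg (orthProj K x)]

lemma norm_orthProj_le (x : H) : ‖orthProj K x‖ ≤ ‖x‖ := by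
  have h := orthProj_pythagoras K x
  nlinarith [norm_nonneg (x - orthProj K x), norm_nonneg x, norm_nonneg (orthProj K x)]

lemma norm_one_sub_orthProj_le : ‖(1 : H →L[ℂ] H) - orthProj K‖ ≤ 1 := by
  refine ContinuousLinearMap.opNorm_le_bound _ zero_le_one fun x => ?_
  simpa using norm_sub_orthProj_le K x

end Aux

section Unit

variable (W : H →L[ℂ] H) (K : Submodule ℂ H) [Submodule.HasOrthogonalProjection K]

lemma norm_star_unitary_le (hW : W ∈ unitary (H →L[ℂ] H)) : ‖star W‖ ≤ 1 := by
  refine ContinuousLinearMap.opNorm_le_bound _ zero_le_one fun x => ?_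
  rw [ContinuousLinearMap.norm_map_of_mem_unitary (Unitary.star_mem hW), one_mul]

lemma isUnit_A (hW : W ∈ unitary (H →L[ℂ] H)) {z : ℂ} (hz : ‖z‖ < 1) :
    IsUnit (W - z • ((1 : H →L[ℂ] H) - orthProj K)) := by
  obtain ⟨h1, h2⟩ := Unitary.mem_iff.mp hW
  have hWunit : IsUnit W := ⟨⟨W, star W, h2, h1⟩, rfl⟩
  have hnorm : ‖star W * (z • ((1 : H →L[ℂ] H) - orthProj K))‖ < 1 := by
    calc ‖star W * (z • ((1 : H →L[ℂ] H) - orthProj K))‖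
        ≤ ‖star W‖ * ‖z • ((1 : H →L[ℂ] H) - orthProj K)‖ := norm_mul_le _ _
      _ ≤ 1 * (‖z‖ * 1) := by
          refine mul_le_mul (norm_star_unitary_le W hW) ?_ (norm_nonneg _) zero_le_one
          rw [norm_smul]
          exact mul_le_mul_of_nonneg_left (norm_one_sub_orthProj_le K) (norm_nonneg _)
      _ < 1 := by simpa using hz
  have key : W - z • ((1 : H →L[ℂ] H) - orthProj K)
      = W * (1 - star W * (z • ((1 : H →L[ℂ] H) - orthProj K))) := by
    rw [mul_sub, mul_one, ← mul_assoc, h2, one_mul]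
  rw [key]
  exact hWunit.mul (Units.oneSub _ hnorm).isUnit

end Unit

section Series

variable (W : H →L[ℂ] H) (K : Submodule ℂ H) [Submodule.HasOrthogonalProjection K]

/-- The iterates `(W* P⊥)ⁿ v`. -/
noncomputable def iter (v : H) (n : ℕ) : H :=
  ((star W * ((1 : H →L[ℂ] H) - orthProj K)) ^ n) v

lemma iter_zero (v : H) : iter W K v 0 = v := rfl

lemma iter_succ (v : H) (n : ℕ) :
    iter W K v (n + 1) = (star W) (((1 : H →L[ℂ] H) - orthProj K) (iter W K v n)) := by
  simp only [iter, pow_succ']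
  rfl

lemma norm_iter_le (hW : W ∈ unitary (H →L[ℂ] H)) (v : H) (n : ℕ) :
    ‖iter W K v n‖ ≤ ‖v‖ := by
  induction n with
  | zero => simp [iter_zero]
  | succ n ih =>
      rw [iter_succ, ContinuousLinearMap.norm_map_of_mem_unitary (Unitary.star_mem hW)]
      calc ‖((1 : H →L[ℂ] H) - orthProj K) (iter W K v n)‖
          ≤ ‖iter W K v n‖ := by
            simpa using norm_sub_orthProj_le K (iter W K v n)
        _ ≤ ‖v‖ := ih

lemma summable_iter (hW : W ∈ unitary (H →L[ℂ] H)) (v : H) {r : ℝ} (hr : |r| < 1) :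
    Summable fun n : ℕ => ((r : ℂ) ^ n) • iter W K v n := by
  refine Summable.of_norm ?_
  have : ∀ n : ℕ, ‖((r : ℂ) ^ n) • iter W K v n‖ ≤ |r| ^ n * ‖v‖ := by
    intro n
    rw [norm_smul, norm_pow]
    have : ‖(r : ℂ)‖ = |r| := by simp [Complex.norm_real]
    rw [this]
    exact mul_le_mul_of_nonneg_left (norm_iter_le W K hW v n) (by positivity)
  refine Summable.of_nonneg_of_le (fun n => norm_nonneg _) this ?_
  exact (summable_geometric_of_lt_one (abs_nonneg r) hr).mul_right _

/-- `y_r := Σ rⁿ (W* P⊥)ⁿ v`. -/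
noncomputable def resSer (v : H) (r : ℝ) : H :=
  ∑' n : ℕ, ((r : ℂ) ^ n) • iter W K v n

lemma A_apply_resSer (hW : W ∈ unitary (H →L[ℂ] H)) (v : H) {r : ℝ} (hr : |r| < 1) :
    (W - (r : ℂ) • ((1 : H →L[ℂ] H) - orthProj K)) (resSer W K v r) = W v := by
  obtain ⟨h1, h2⟩ := Unitary.mem_iff.mp hW
  set Q : H →L[ℂ] H := (1 : H →L[ℂ] H) - orthProj K with hQ
  have hsum := summable_iter W K hW v hr
  have hWiter : ∀ n, Q (iter W K v n) = W (iter W K v (n + 1)) := by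
    intro n
    rw [iter_succ]
    have : W ((star W) ((Q) (iter W K v n))) = (W * star W) (Q (iter W K v n)) := rfl
    rw [this, h2]
    rfl
  have hQy : (r : ℂ) • Q (resSer W K v r) = W (resSer W K v r) - W v := by
    have h1' : Q (resSer W K v r) = ∑' n : ℕ, ((r : ℂ) ^ n) • W (iter W K v (n + 1)) := by
      rw [resSer, ContinuousLinearMap.map_tsum Q hsum]
      congr 1; funext n
      rw [Q.map_smul, hWiter]
    rw [h1']
    have h2' : (r : ℂ) • ∑' n : ℕ, ((r : ℂ) ^ n) • W (iter W K v (n + 1))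
        = W (∑' n : ℕ, ((r : ℂ) ^ (n + 1)) • iter W K v (n + 1)) := by
      rw [← tsum_const_smul'' ((r : ℂ))]
      have hterm : ∀ n : ℕ, (r : ℂ) • (((r : ℂ) ^ n) • W (iter W K v (n + 1)))
          = W (((r : ℂ) ^ (n + 1)) • iter W K v (n + 1)) := by
        intro n
        rw [W.map_smul, smul_smul, pow_succ']
      rw [tsum_congr hterm, ← ContinuousLinearMap.map_tsum W ((summable_nat_add_iff 1).2 hsum)]
    rw [h2']
    have h3' : ∑' n : ℕ, ((r : ℂ) ^ (n + 1)) • iter W K v (n + 1)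
        = resSer W K v r - v := by
      have := Summable.tsum_eq_zero_add hsum
      rw [resSer, this, iter_zero]
      simp
    rw [h3', map_sub]
  simp only [ContinuousLinearMap.sub_apply, ContinuousLinearMap.smul_apply, ← hQ, hQy]
  abel

end Series

section Bessel

variable (W : H →L[ℂ] H) (K : Submodule ℂ H) [Submodule.HasOrthogonalProjection K]

lemma bessel_sum (hW : W ∈ unitary (H →L[ℂ] H)) (v : H) (N : ℕ) :
    ∑ n ∈ Finset.range N, ‖orthProj K (iter W K v n)‖ ^ 2 ≤ ‖v‖ ^ 2 := by
  have key : ∀ n, ‖iter W K v (n + 1)‖ ^ 2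
      = ‖iter W K v n‖ ^ 2 - ‖orthProj K (iter W K v n)‖ ^ 2 := by
    intro n
    rw [iter_succ, ContinuousLinearMap.norm_map_of_mem_unitary (Unitary.star_mem hW)]
    have hp := orthProj_pythagoras K (iter W K v n)
    have h2 : ((1 : H →L[ℂ] H) - orthProj K) (iter W K v n)
        = iter W K v n - orthProj K (iter W K v n) := by
      simp [ContinuousLinearMap.sub_apply]
    rw [h2]; linarith
  have main : ∀ N, ∑ n ∈ Finset.range N, ‖orthProj K (iter W K v n)‖ ^ 2
      = ‖v‖ ^ 2 - ‖iter W K v N‖ ^ 2 := by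
    intro N
    induction N with
    | zero => simp [iter_zero]
    | succ N ih =>
        rw [Finset.sum_range_succ, ih, key N]; ring
  rw [main N]
  nlinarith [norm_nonneg (iter W K v N)]

lemma summable_bessel (hW : W ∈ unitary (H →L[ℂ] H)) (v : H) :
    Summable fun n : ℕ => ‖orthProj K (iter W K v n)‖ ^ 2 :=
  summable_of_sum_range_le (fun n => by positivity) (bessel_sum W K hW v)

lemma tsum_bessel_le (hW : W ∈ unitary (H →L[ℂ] H)) (v : H) :
    ∑' n : ℕ, ‖orthProj K (iter W K v n)‖ ^ 2 ≤ ‖v‖ ^ 2 :=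
  Summable.tsum_le_of_sum_range_le (summable_bessel W K hW v) (bessel_sum W K hW v)

lemma norm_orthProj_resSer_le (hW : W ∈ unitary (H →L[ℂ] H)) (v : H) {r : ℝ}
    (hr : |r| < 1) :
    ‖orthProj K (resSer W K v r)‖ ≤ ‖v‖ / Real.sqrt (1 - r ^ 2) := by
  set c : ℕ → ℝ := fun n => ‖orthProj K (iter W K v n)‖ with hc
  have hr2 : r ^ 2 < 1 := by nlinarith [abs_nonneg r, _root_.sq_abs r, abs_lt.mp hr]
  have hr2' : (0 : ℝ) < 1 - r ^ 2 := by linarith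
  have hcle : ∀ n, c n ≤ ‖v‖ :=
    fun n => le_trans (norm_orthProj_le K _) (norm_iter_le W K hW v n)
  -- image of the series under P
  have hmap : orthProj K (resSer W K v r)
      = ∑' n : ℕ, ((r : ℂ) ^ n) • orthProj K (iter W K v n) := by
    rw [resSer, ContinuousLinearMap.map_tsum _ (summable_iter W K hW v hr)]
    congr 1; funext n; rw [ContinuousLinearMap.map_smul]
  have hnorm_term : ∀ n : ℕ, ‖((r : ℂ) ^ n) • orthProj K (iter W K v n)‖
      = |r| ^ n * c n := by
    intro n; rw [norm_smul, norm_pow]; simp [Complex.norm_real, hc]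
  have hsummable : Summable fun n : ℕ => |r| ^ n * c n := by
    refine Summable.of_nonneg_of_le (fun n => by positivity)
      (fun n => mul_le_mul_of_nonneg_left (hcle n) (by positivity)) ?_
    exact (summable_geometric_of_lt_one (abs_nonneg r) hr).mul_right _
  set B : ℝ := ‖v‖ / Real.sqrt (1 - r ^ 2) with hB
  have hBnonneg : 0 ≤ B := by positivity
  have hB2 : B ^ 2 = (1 - r ^ 2)⁻¹ * ‖v‖ ^ 2 := by
    rw [hB, div_pow, Real.sq_sqrt hr2'.le, div_eq_inv_mul]
  -- partial sums bound
  have hpartial : ∀ N : ℕ, ∑ n ∈ Finset.range N, |r| ^ n * c n ≤ B := by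
    intro N
    have hCS := Finset.sum_mul_sq_le_sq_mul_sq (Finset.range N)
      (fun n => |r| ^ n) (fun n => c n)
    have hgeom : ∑ n ∈ Finset.range N, (|r| ^ n) ^ 2 ≤ (1 - r ^ 2)⁻¹ := by
      have heq : ∀ n : ℕ, (|r| ^ n) ^ 2 = (r ^ 2) ^ n := by
        intro n; rw [← pow_mul, ← pow_mul, mul_comm n 2, pow_mul, pow_mul, _root_.sq_abs]
      calc ∑ n ∈ Finset.range N, (|r| ^ n) ^ 2
          = ∑ n ∈ Finset.range N, (r ^ 2) ^ n := by
            exact Finset.sum_congr rfl fun n _ => heq n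
        _ ≤ ∑' n : ℕ, (r ^ 2) ^ n :=
            Summable.sum_le_tsum _ (fun n _ => by positivity)
              (summable_geometric_of_lt_one (by positivity) hr2)
        _ = (1 - r ^ 2)⁻¹ := tsum_geometric_of_lt_one (by positivity) hr2
    have hbessel : ∑ n ∈ Finset.range N, c n ^ 2 ≤ ‖v‖ ^ 2 := bessel_sum W K hW v N
    have hsq : (∑ n ∈ Finset.range N, |r| ^ n * c n) ^ 2 ≤ B ^ 2 := by
      calc (∑ n ∈ Finset.range N, |r| ^ n * c n) ^ 2
          ≤ (∑ n ∈ Finset.range N, (|r| ^ n) ^ 2) * ∑ n ∈ Finset.range N, c n ^ 2 := hCS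
        _ ≤ (1 - r ^ 2)⁻¹ * ‖v‖ ^ 2 := by
            refine mul_le_mul hgeom hbessel ?_ ?_
            · exact Finset.sum_nonneg fun n _ => by positivity
            · positivity
        _ = B ^ 2 := hB2.symm
    have hnn : 0 ≤ ∑ n ∈ Finset.range N, |r| ^ n * c n :=
      Finset.sum_nonneg fun n _ => by positivity
    exact (pow_le_pow_iff_left₀ hnn hBnonneg two_ne_zero).1 hsq
  calc ‖orthProj K (resSer W K v r)‖
      ≤ ∑' n : ℕ, ‖((r : ℂ) ^ n) • orthProj K (iter W K v n)‖ := by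
        rw [hmap]
        refine norm_tsum_le_tsum_norm ?_
        exact hsummable.congr fun n => (hnorm_term n).symm
    _ = ∑' n : ℕ, |r| ^ n * c n := tsum_congr hnorm_term
    _ ≤ B := Summable.tsum_le_of_sum_range_le hsummable hpartial

end Bessel

section Cyc

variable (W : H →L[ℂ] H) (K : Submodule ℂ H) [Submodule.HasOrthogonalProjection K]

lemma orthProj_ne_zero_of_eigen (hcyc : cyclicSubspace W K = ⊤)
    {v : H} (hv : v ≠ 0) {t : ℂ} (hWv : W v = t • v) (hsWv : star W v = t • v) :
    orthProj K v ≠ 0 := by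
  intro h0
  have hvK : v ∈ Kᗮ := by
    have := K.sub_starProjection_mem_orthogonal v
    have h' : K.starProjection v = orthProj K v := rfl
    rwa [h', h0, sub_zero] at this
  have hWn : ∀ n : ℕ, (W ^ n) v = t ^ n • v := by
    intro n
    induction n with
    | zero => simp
    | succ n ih =>
        rw [pow_succ', pow_succ']
        have : (W * W ^ n) v = W ((W ^ n) v) := rfl
        rw [this, ih, map_smul, hWv, smul_smul, mul_comm]
  have hsWn : ∀ n : ℕ, ((star W) ^ n) v = t ^ n • v := by
    intro n
    induction n with
    | zero => simp
    | succ n ih =>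
        rw [pow_succ', pow_succ']
        have : (star W * (star W) ^ n) v = (star W) (((star W) ^ n) v) := rfl
        rw [this, ih, map_smul, hsWv, smul_smul, mul_comm]
  have horth : v ∈ (⨆ n : ℕ, Submodule.map ((W ^ n : H →L[ℂ] H) : H →ₗ[ℂ] H) K ⊔ Submodule.map (((star W) ^ n : H →L[ℂ] H) : H →ₗ[ℂ] H) K)ᗮ := by
    rw [Submodule.mem_orthogonal]
    intro u hu
    refine Submodule.iSup_induction
      (p := fun n : ℕ => Submodule.map ((W ^ n : H →L[ℂ] H) : H →ₗ[ℂ] H) K ⊔ Submodule.map (((star W) ^ n : H →L[ℂ] H) : H →ₗ[ℂ] H) K)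
      (motive := fun x => (inner ℂ x v : ℂ) = 0) hu ?_ (inner_zero_left v) ?_
    · intro n x hx
      rcases Submodule.mem_sup.mp hx with ⟨a, ha, b, hb, rfl⟩
      rcases Submodule.mem_map.mp ha with ⟨a', ha', rfl⟩
      rcases Submodule.mem_map.mp hb with ⟨b', hb', rfl⟩
      have hWa : (inner ℂ ((W ^ n) a') v : ℂ) = 0 := by
        have hadj : (inner ℂ ((W ^ n) a') v : ℂ) = inner ℂ a' ((ContinuousLinearMap.adjoint (W ^ n)) v) :=
          (ContinuousLinearMap.adjoint_inner_right (W ^ n) a' v).symm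
        rw [hadj, ← ContinuousLinearMap.star_eq_adjoint, star_pow, hsWn n,
          inner_smul_right, hvK a' ha', mul_zero]
      have hWb : (inner ℂ (((star W) ^ n) b') v : ℂ) = 0 := by
        have hadj : (inner ℂ (((star W) ^ n) b') v : ℂ)
            = inner ℂ b' ((ContinuousLinearMap.adjoint ((star W) ^ n)) v) :=
          (ContinuousLinearMap.adjoint_inner_right ((star W) ^ n) b' v).symm
        rw [hadj, ← ContinuousLinearMap.star_eq_adjoint, star_pow, star_star, hWn n,
          inner_smul_right, hvK b' hb', mul_zero]
      rw [inner_add_left]; exact (congrArg₂ (· + ·) hWa hWb).trans (add_zero 0)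
    · intro x y hx hy
      rw [inner_add_left, hx, hy, add_zero]
  have hbot : (⨆ n : ℕ, Submodule.map ((W ^ n : H →L[ℂ] H) : H →ₗ[ℂ] H) K ⊔ Submodule.map (((star W) ^ n : H →L[ℂ] H) : H →ₗ[ℂ] H) K)ᗮ = ⊥ := by
    rw [← Submodule.topologicalClosure_eq_top_iff]
    exact hcyc
  rw [hbot, Submodule.mem_bot] at horth
  exact hv horth

end Cyc

section Forward

variable (W : H →L[ℂ] H) (K : Submodule ℂ H) [Submodule.HasOrthogonalProjection K]

lemma star_apply_eigen (hW : W ∈ unitary (H →L[ℂ] H)) {v : H} {t : ℂ} (ht2 : t * t = 1)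
    (hWv : W v = t • v) : star W v = t • v := by
  obtain ⟨h1, _⟩ := Unitary.mem_iff.mp hW
  have h' : (star W) (W v) = (star W * W) v := rfl
  have hv' : v = t • (star W) v := by
    have := congrArg (fun x => (star W) x) hWv
    simp only [map_smul] at this
    rw [h', h1] at this
    simpa using this
  calc star W v = (t * t) • star W v := by rw [ht2, one_smul]
    _ = t • (t • star W v) := by rw [smul_smul]
    _ = t • v := by rw [← hv']

lemma forward_eigen (hW : W ∈ unitary (H →L[ℂ] H)) (hcyc : cyclicSubspace W K = ⊤)
    (t : ℝ) (ht : t = 1 ∨ t = -1) (fb : K →L[ℂ] K)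
    (hfb : Tendsto (fun r : ℝ => schurAt W K (r : ℂ))
      (nhdsWithin (t : ℝ) (Set.Ioo (-1 : ℝ) 1)) (nhds fb))
    (v : H) (hv : v ≠ 0) (hWv : W v = ((t : ℝ) : ℂ) • v) :
    ∃ u : K, u ≠ 0 ∧ fb u = ((t : ℝ) : ℂ) • u := by
  have ht2 : t * t = 1 := by rcases ht with h | h <;> rw [h] <;> norm_num
  have htabs : |t| = 1 := by rcases ht with h | h <;> rw [h] <;> norm_num
  have ht2c : ((t : ℝ) : ℂ) * ((t : ℝ) : ℂ) = 1 := by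
    rw [← Complex.ofReal_mul, ht2, Complex.ofReal_one]
  have hsWv : star W v = ((t : ℝ) : ℂ) • v := star_apply_eigen W hW ht2c hWv
  set u₀ : K := K.orthogonalProjectionOnto v with hu₀def
  have hu₀coe : (u₀ : H) = orthProj K v := rfl
  have hu₀ne : u₀ ≠ 0 := by
    intro h
    exact orthProj_ne_zero_of_eigen W K hcyc hv hWv hsWv
      (by rw [← hu₀coe, h, Submodule.coe_zero])
  set l := nhdsWithin (t : ℝ) (Set.Ioo (-1 : ℝ) 1) with hl
  have hmem : t ∈ closure (Set.Ioo (-1 : ℝ) 1) := by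
    rw [closure_Ioo (by norm_num : (-1 : ℝ) ≠ 1)]
    rcases ht with h | h <;> rw [h] <;> constructor <;> norm_num
  have hne : l.NeBot := mem_closure_iff_nhdsWithin_neBot.mp hmem
  -- key identity on (-1,1)
  have hident : ∀ r ∈ Set.Ioo (-1 : ℝ) 1,
      (u₀ : H) = ((((t : ℝ) : ℂ) - (r : ℂ)) * ((t : ℝ) : ℂ)) • orthProj K (resSer W K v r)
        + (r : ℂ) • ((schurAt W K (r : ℂ) u₀ : K) : H) := by
    intro r hr
    have hrabs : |r| < 1 := abs_lt.mpr ⟨hr.1, hr.2⟩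
    have hrc : ‖(r : ℂ)‖ < 1 := by rwa [Complex.norm_real, Real.norm_eq_abs]
    set A : H →L[ℂ] H := W - (r : ℂ) • ((1 : H →L[ℂ] H) - orthProj K) with hA
    have hAunit : IsUnit A := isUnit_A W K hW hrc
    set Rv : H →L[ℂ] H := Ring.inverse A with hRvdef
    have hRA : Rv * A = 1 := Ring.inverse_mul_cancel A hAunit
    have hcancel : ∀ x : H, Rv (A x) = x := by
      intro x
      have h' : (Rv * A) x = Rv (A x) := rfl
      rw [← h', hRA, ContinuousLinearMap.one_apply]
    have hres : A (resSer W K v r) = ((t : ℝ) : ℂ) • v := by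
      rw [hA, A_apply_resSer W K hW v hrabs, hWv]
    have hRvv : Rv v = ((t : ℝ) : ℂ) • resSer W K v r := by
      have h' := hcancel (resSer W K v r)
      rw [hres, map_smul] at h'
      calc Rv v = (((t : ℝ) : ℂ) * ((t : ℝ) : ℂ)) • Rv v := by rw [ht2c, one_smul]
        _ = ((t : ℝ) : ℂ) • (((t : ℝ) : ℂ) • Rv v) := by rw [smul_smul]
        _ = ((t : ℝ) : ℂ) • resSer W K v r := by rw [h']
    have hAv : A v = (((t : ℝ) : ℂ) - (r : ℂ)) • v + (r : ℂ) • orthProj K v := by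
      rw [hA]
      simp only [ContinuousLinearMap.sub_apply, ContinuousLinearMap.smul_apply,
        ContinuousLinearMap.one_apply, hWv]
      rw [smul_sub, sub_smul]
      abel
    have hv_expand : v = (((t : ℝ) : ℂ) - (r : ℂ)) • Rv v + (r : ℂ) • Rv (orthProj K v) := by
      have h' := hcancel v
      rw [hAv, map_add, map_smul, map_smul] at h'
      exact h'.symm
    have hPv : orthProj K v
        = (((t : ℝ) : ℂ) - (r : ℂ)) • orthProj K (Rv v)
          + (r : ℂ) • orthProj K (Rv (orthProj K v)) := by
      conv_lhs => rw [hv_expand]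
      rw [map_add, map_smul, map_smul]
    have hschur : ((schurAt W K (r : ℂ) u₀ : K) : H) = orthProj K (Rv (orthProj K v)) := rfl
    rw [hu₀coe, hPv, hRvv, map_smul, smul_smul, hschur]
  -- limit of the second term
  have hg2 : Tendsto (fun r : ℝ => (r : ℂ) • ((schurAt W K (r : ℂ) u₀ : K) : H)) l
      (nhds (((t : ℝ) : ℂ) • ((fb u₀ : K) : H))) := by
    have hid : Tendsto (fun r : ℝ => r) l (nhds t) := tendsto_id.mono_left nhdsWithin_le_nhds
    have h1' : Tendsto (fun r : ℝ => (r : ℂ)) l (nhds ((t : ℝ) : ℂ)) :=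
      (Complex.continuous_ofReal.tendsto t).comp hid
    have h2' : Tendsto (fun r : ℝ => schurAt W K (r : ℂ) u₀) l (nhds (fb u₀)) :=
      ((ContinuousLinearMap.apply ℂ K u₀).continuous.tendsto fb).comp hfb
    have h3' : Tendsto (fun r : ℝ => ((schurAt W K (r : ℂ) u₀ : K) : H)) l
        (nhds ((fb u₀ : K) : H)) :=
      ((K.subtypeL.continuous.tendsto (fb u₀)).comp h2')
    exact h1'.smul h3'
  -- limit of the first term
  have hg1 : Tendsto (fun r : ℝ =>
      ((((t : ℝ) : ℂ) - (r : ℂ)) * ((t : ℝ) : ℂ)) • orthProj K (resSer W K v r)) l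
      (nhds (0 : H)) := by
    set φ : ℝ → ℝ := fun r => Real.sqrt (1 - t * r) / Real.sqrt (1 + t * r) * ‖v‖ with hφ
    have hbound : ∀ r ∈ Set.Ioo (-1 : ℝ) 1,
        ‖((((t : ℝ) : ℂ) - (r : ℂ)) * ((t : ℝ) : ℂ)) • orthProj K (resSer W K v r)‖ ≤ φ r := by
      intro r hr
      have hrabs : |r| < 1 := abs_lt.mpr ⟨hr.1, hr.2⟩
      have htr : |t * r| < 1 := by rw [abs_mul, htabs, one_mul]; exact hrabs
      have htr1 : t * r < 1 := (abs_lt.mp htr).2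
      have htr2 : -1 < t * r := (abs_lt.mp htr).1
      have h0m : (0 : ℝ) < 1 - t * r := by linarith
      have h0p : (0 : ℝ) < 1 + t * r := by linarith
      have hscal : (((t : ℝ) : ℂ) - (r : ℂ)) * ((t : ℝ) : ℂ) = ((1 - t * r : ℝ) : ℂ) := by
        push_cast
        linear_combination ht2c
      rw [norm_smul, hscal, Complex.norm_real, Real.norm_eq_abs, abs_of_pos h0m]
      have hle := norm_orthProj_resSer_le W K hW v hrabs
      have hstep : (1 - t * r) * ‖orthProj K (resSer W K v r)‖
          ≤ (1 - t * r) * (‖v‖ / Real.sqrt (1 - r ^ 2)) :=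
        mul_le_mul_of_nonneg_left hle h0m.le
      refine hstep.trans (le_of_eq ?_)
      have hsq : 1 - r ^ 2 = (1 - t * r) * (1 + t * r) := by nlinarith [ht2]
      rw [hφ, hsq, Real.sqrt_mul h0m.le]
      set s1 := Real.sqrt (1 - t * r) with hs1def
      set s2 := Real.sqrt (1 + t * r) with hs2def
      have hs1 : s1 ≠ 0 := by rw [hs1def]; positivity
      have hs2 : s2 ≠ 0 := by rw [hs2def]; positivity
      have hmul : 1 - t * r = s1 * s1 := by
        rw [hs1def]; exact (Real.mul_self_sqrt h0m.le).symm
      rw [hmul]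
      field_simp
      ring
    have hφ0 : Tendsto φ l (nhds 0) := by
      have hid : Tendsto (fun r : ℝ => r) l (nhds t) := tendsto_id.mono_left nhdsWithin_le_nhds
      have hnum : Tendsto (fun r : ℝ => Real.sqrt (1 - t * r)) l (nhds 0) := by
        have h1' : Tendsto (fun r : ℝ => 1 - t * r) l (nhds (1 - t * t)) :=
          (tendsto_const_nhds.sub (tendsto_const_nhds.mul hid))
        rw [ht2, sub_self] at h1'
        have := (Real.continuous_sqrt.tendsto 0).comp h1'
        simpa [Function.comp_def] using this
      have hden : Tendsto (fun r : ℝ => Real.sqrt (1 + t * r)) l (nhds (Real.sqrt 2)) := by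
        have h1' : Tendsto (fun r : ℝ => 1 + t * r) l (nhds (1 + t * t)) :=
          (tendsto_const_nhds.add (tendsto_const_nhds.mul hid))
        rw [ht2] at h1'
        have := (Real.continuous_sqrt.tendsto (1 + 1)).comp h1'
        norm_num at this ⊢
        exact this
      have hq : Tendsto (fun r : ℝ => Real.sqrt (1 - t * r) / Real.sqrt (1 + t * r)) l
          (nhds (0 / Real.sqrt 2)) :=
        hnum.div hden (by positivity)
      rw [zero_div] at hq
      simpa [hφ] using hq.mul_const ‖v‖
    refine squeeze_zero_norm' ?_ hφ0
    filter_upwards [self_mem_nhdsWithin] with r hr using hbound r hr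
  -- identify the limit
  have hcongr : (fun _ : ℝ => (u₀ : H)) =ᶠ[l] fun r : ℝ =>
      ((((t : ℝ) : ℂ) - (r : ℂ)) * ((t : ℝ) : ℂ)) • orthProj K (resSer W K v r)
        + (r : ℂ) • ((schurAt W K (r : ℂ) u₀ : K) : H) := by
    filter_upwards [self_mem_nhdsWithin] with r hr using hident r hr
  have heq : (u₀ : H) = 0 + ((t : ℝ) : ℂ) • ((fb u₀ : K) : H) :=
    tendsto_nhds_unique (tendsto_const_nhds.congr' hcongr) (hg1.add hg2)
  rw [zero_add] at heq
  refine ⟨u₀, hu₀ne, ?_⟩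
  have hcoe : ((fb u₀ : K) : H) = ((t : ℝ) : ℂ) • (u₀ : H) := by
    calc ((fb u₀ : K) : H) = (((t : ℝ) : ℂ) * ((t : ℝ) : ℂ)) • ((fb u₀ : K) : H) := by
          rw [ht2c, one_smul]
      _ = ((t : ℝ) : ℂ) • (((t : ℝ) : ℂ) • ((fb u₀ : K) : H)) := by rw [smul_smul]
      _ = ((t : ℝ) : ℂ) • (u₀ : H) := by rw [← heq]
  exact Subtype.ext (by rw [Submodule.coe_smul]; exact hcoe)

end Forward

section Fredholm

/-- Fredholm alternative for finite-rank perturbations of the identity. -/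
lemma isUnit_one_add_of_finiteRank (T : H →L[ℂ] H) (V : Submodule ℂ H)
    [FiniteDimensional ℂ V] (hTV : ∀ x, T x ∈ V)
    (hinj : Function.Injective ((1 : H →L[ℂ] H) + T)) :
    IsUnit ((1 : H →L[ℂ] H) + T) := by
  set g : H →L[ℂ] H := 1 + T with hg
  have hgapply : ∀ x, g x = x + T x := fun x => rfl
  have hgV : ∀ x ∈ V, g x ∈ V := by
    intro x hx
    rw [hgapply]
    exact V.add_mem hx (hTV x)
  set g' : V →ₗ[ℂ] V := (g : H →ₗ[ℂ] H).restrict hgV with hg'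
  have hcoe : ∀ a : V, ((g' a : V) : H) = g (a : H) := fun _ => rfl
  have hg'inj : Function.Injective g' := by
    intro a b hab
    have h' : g (a : H) = g (b : H) := by
      rw [← hcoe, ← hcoe, hab]
    exact Subtype.ext (hinj h')
  have hg'surj : Function.Surjective g' := LinearMap.injective_iff_surjective.mp hg'inj
  have hgsurj : Function.Surjective g := by
    intro y
    obtain ⟨z, hz⟩ := hg'surj ⟨T y, hTV y⟩
    have hz' : g (z : H) = T y := by
      have h' := congrArg (Subtype.val) hz
      rw [hcoe] at h'
      exact h'
    refine ⟨y - (z : H), ?_⟩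
    have : g (y - (z : H)) = g y - g (z : H) := map_sub g _ _
    rw [this, hz', hgapply y]
    abel
  have hker : LinearMap.ker (g : H →ₗ[ℂ] H) = ⊥ := LinearMap.ker_eq_bot.mpr hinj
  have hrange : LinearMap.range (g : H →ₗ[ℂ] H) = ⊤ := LinearMap.range_eq_top.mpr hgsurj
  set e := ContinuousLinearEquiv.ofBijective g hker hrange with he
  have hecoe : ⇑e = ⇑g := ContinuousLinearEquiv.coeFn_ofBijective g hker hrange
  refine ⟨⟨g, e.symm.toContinuousLinearMap, ?_, ?_⟩, rfl⟩
  · ext x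
    have h1 : g (e.symm x) = e (e.symm x) := by rw [hecoe]
    simp only [ContinuousLinearMap.mul_apply, ContinuousLinearMap.one_apply,
      ContinuousLinearEquiv.coe_coe]
    rw [h1, e.apply_symm_apply]
  · ext x
    have h1 : g x = e x := by rw [hecoe]
    simp only [ContinuousLinearMap.mul_apply, ContinuousLinearMap.one_apply,
      ContinuousLinearEquiv.coe_coe]
    rw [h1, e.symm_apply_apply]

end Fredholm

section Backward

variable (W : H →L[ℂ] H) (K : Submodule ℂ H) [Submodule.HasOrthogonalProjection K]

lemma isUnit_W_sub_smul_one {τ : ℂ} (hgap : InEssentialGap W τ)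
    (hno : ¬ ∃ v : H, v ≠ 0 ∧ W v = τ • v) :
    IsUnit (W - τ • (1 : H →L[ℂ] H)) := by
  by_cases hσ : τ ∈ spectrum ℂ W
  · obtain ⟨Γ, hΓ, hτΓ, hall⟩ := hgap
    obtain ⟨_, hker, _⟩ := hall τ ⟨hτΓ, hσ⟩
    obtain ⟨x, hx, hxne⟩ := (Submodule.ne_bot_iff _).mp hker
    exfalso
    refine hno ⟨x, hxne, ?_⟩
    have hx0 : (W - τ • (1 : H →L[ℂ] H)) x = 0 := LinearMap.mem_ker.mp hx
    have : W x - τ • x = 0 := by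
      simpa [ContinuousLinearMap.sub_apply, ContinuousLinearMap.smul_apply,
        ContinuousLinearMap.one_apply] using hx0
    rw [sub_eq_zero] at this; exact this
  · have h1 := spectrum.notMem_iff.mp hσ
    have h2 : algebraMap ℂ (H →L[ℂ] H) τ = τ • (1 : H →L[ℂ] H) :=
      Algebra.algebraMap_eq_smul_one τ
    rw [h2] at h1
    have := h1.neg
    rwa [neg_sub] at this

end Backward

section Backward2

variable (W : H →L[ℂ] H) (K : Submodule ℂ H) [Submodule.HasOrthogonalProjection K]

lemma isUnit_A_boundary [FiniteDimensional ℂ K] (hW : W ∈ unitary (H →L[ℂ] H)) {τ : ℂ}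
    (hτ : ‖τ‖ = 1) (hgap : InEssentialGap W τ)
    (hno : ¬ ∃ v : H, v ≠ 0 ∧ W v = τ • v) :
    IsUnit (W - τ • ((1 : H →L[ℂ] H) - orthProj K)) := by
  have hS : IsUnit (W - τ • (1 : H →L[ℂ] H)) := isUnit_W_sub_smul_one W hgap hno
  set S : H →L[ℂ] H := W - τ • (1 : H →L[ℂ] H) with hSdef
  set Su := hS.unit with hSudef
  have hSu : (Su : H →L[ℂ] H) = S := hS.unit_spec
  set T : H →L[ℂ] H := (↑Su⁻¹ : H →L[ℂ] H) * (τ • orthProj K) with hT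
  have hA_eq : W - τ • ((1 : H →L[ℂ] H) - orthProj K) = S * (1 + T) := by
    have h2 : S * T = τ • orthProj K := by
      rw [hT, ← hSu, Units.mul_inv_cancel_left]
    calc W - τ • ((1 : H →L[ℂ] H) - orthProj K)
        = (W - τ • (1 : H →L[ℂ] H)) + τ • orthProj K := by rw [smul_sub]; abel
      _ = S + S * T := by rw [h2, hSdef]
      _ = S * (1 + T) := by rw [mul_add, mul_one]
  have hAinj : ∀ z : H, (W - τ • ((1 : H →L[ℂ] H) - orthProj K)) z = 0 → z = 0 := by
    intro z hz
    by_contra hzne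
    have hz' : W z = τ • (z - orthProj K z) := by
      have h0 : W z - τ • (z - orthProj K z) = 0 := by
        simpa [ContinuousLinearMap.sub_apply, ContinuousLinearMap.smul_apply,
          ContinuousLinearMap.one_apply] using hz
      rwa [sub_eq_zero] at h0
    have hnorm : ‖z‖ = ‖z - orthProj K z‖ := by
      calc ‖z‖ = ‖W z‖ := (ContinuousLinearMap.norm_map_of_mem_unitary hW z).symm
        _ = ‖τ‖ * ‖z - orthProj K z‖ := by rw [hz', norm_smul]
        _ = ‖z - orthProj K z‖ := by rw [hτ, one_mul]
    have hP0 : orthProj K z = 0 := by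
      have hp := orthProj_pythagoras K z
      have hsq2 : ‖z‖ ^ 2 = ‖z - orthProj K z‖ ^ 2 := by rw [hnorm]
      have h0 : ‖orthProj K z‖ ^ 2 = 0 := by linarith
      have h0' : ‖orthProj K z‖ = 0 := (pow_eq_zero_iff two_ne_zero).mp h0
      exact norm_eq_zero.mp h0'
    have hWz : W z = τ • z := by rw [hz', hP0, sub_zero]
    exact hno ⟨z, hzne, hWz⟩
  have hinj1T : Function.Injective ((1 : H →L[ℂ] H) + T) := by
    intro a b hab
    have h0 : ((1 : H →L[ℂ] H) + T) (a - b) = 0 := by rw [map_sub, hab, sub_self]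
    have hA0 : (W - τ • ((1 : H →L[ℂ] H) - orthProj K)) (a - b) = 0 := by
      rw [hA_eq]
      have h1 : (S * (1 + T)) (a - b) = S (((1 : H →L[ℂ] H) + T) (a - b)) := rfl
      rw [h1, h0, map_zero]
    exact sub_eq_zero.mp (hAinj _ hA0)
  set V : Submodule ℂ H :=
    Submodule.map ((↑Su⁻¹ : H →L[ℂ] H) : H →ₗ[ℂ] H) K with hV
  have hTV : ∀ x, T x ∈ V := by
    intro x
    refine Submodule.mem_map.mpr ⟨τ • orthProj K x, ?_, rfl⟩
    exact K.smul_mem τ ((K.orthogonalProjectionOnto x).2)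
  rw [hA_eq]
  exact hS.mul (isUnit_one_add_of_finiteRank T V hTV hinj1T)

lemma schurAt_tendsto_boundary (t : ℝ)
    (hA : IsUnit (W - ((t : ℝ) : ℂ) • ((1 : H →L[ℂ] H) - orthProj K))) :
    Tendsto (fun r : ℝ => schurAt W K (r : ℂ)) (nhdsWithin (t : ℝ) (Set.Ioo (-1 : ℝ) 1))
      (nhds (schurAt W K ((t : ℝ) : ℂ))) := by
  set l := nhdsWithin (t : ℝ) (Set.Ioo (-1 : ℝ) 1) with hl
  have hid : Tendsto (fun r : ℝ => r) l (nhds t) := tendsto_id.mono_left nhdsWithin_le_nhds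
  have hc : Tendsto (fun r : ℝ => (r : ℂ)) l (nhds ((t : ℝ) : ℂ)) :=
    (Complex.continuous_ofReal.tendsto t).comp hid
  have hA' : Tendsto (fun r : ℝ => W - (r : ℂ) • ((1 : H →L[ℂ] H) - orthProj K)) l
      (nhds (W - ((t : ℝ) : ℂ) • ((1 : H →L[ℂ] H) - orthProj K))) :=
    tendsto_const_nhds.sub (hc.smul_const _)
  have hcontinv : ContinuousAt Ring.inverse
      (W - ((t : ℝ) : ℂ) • ((1 : H →L[ℂ] H) - orthProj K)) := by
    have h0 := NormedRing.inverse_continuousAt hA.unit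
    rwa [hA.unit_spec] at h0
  have hinv := hcontinv.tendsto.comp hA'
  have hF : Continuous (fun Q : H →L[ℂ] H =>
      (K.orthogonalProjectionOnto ∘L Q ∘L K.subtypeL : K →L[ℂ] K)) :=
    continuous_const.clm_comp (continuous_id.clm_comp continuous_const)
  have := (hF.tendsto _).comp hinv
  exact this

lemma backward_eigen [FiniteDimensional ℂ K] (hW : W ∈ unitary (H →L[ℂ] H)) (t : ℝ)
    (ht : t = 1 ∨ t = -1) (hgap : InEssentialGap W ((t : ℝ) : ℂ)) (fb : K →L[ℂ] K)
    (hfb : Tendsto (fun r : ℝ => schurAt W K (r : ℂ))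
      (nhdsWithin (t : ℝ) (Set.Ioo (-1 : ℝ) 1)) (nhds fb))
    (u : K) (hu : u ≠ 0) (hfu : fb u = ((t : ℝ) : ℂ) • u) :
    ∃ v : H, v ≠ 0 ∧ W v = ((t : ℝ) : ℂ) • v := by
  by_contra hno
  have ht2 : t * t = 1 := by rcases ht with h | h <;> rw [h] <;> norm_num
  have ht2c : ((t : ℝ) : ℂ) * ((t : ℝ) : ℂ) = 1 := by
    rw [← Complex.ofReal_mul, ht2, Complex.ofReal_one]
  have htne : ((t : ℝ) : ℂ) ≠ 0 := by
    intro h; rw [h, zero_mul] at ht2c; exact zero_ne_one ht2c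
  have hτ : ‖((t : ℝ) : ℂ)‖ = 1 := by
    rw [Complex.norm_real, Real.norm_eq_abs]
    rcases ht with h | h <;> rw [h] <;> norm_num
  have hA : IsUnit (W - ((t : ℝ) : ℂ) • ((1 : H →L[ℂ] H) - orthProj K)) :=
    isUnit_A_boundary W K hW hτ hgap hno
  have htend := schurAt_tendsto_boundary W K t hA
  have hmem : t ∈ closure (Set.Ioo (-1 : ℝ) 1) := by
    rw [closure_Ioo (by norm_num : (-1 : ℝ) ≠ 1)]
    rcases ht with h | h <;> rw [h] <;> constructor <;> norm_num
  have hne : (nhdsWithin (t : ℝ) (Set.Ioo (-1 : ℝ) 1)).NeBot :=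
    mem_closure_iff_nhdsWithin_neBot.mp hmem
  have hfb_eq : fb = schurAt W K ((t : ℝ) : ℂ) := tendsto_nhds_unique hfb htend
  set A : H →L[ℂ] H := W - ((t : ℝ) : ℂ) • ((1 : H →L[ℂ] H) - orthProj K) with hAdef
  set Rv : H →L[ℂ] H := Ring.inverse A with hRvdef
  set x : H := Rv (u : H) with hx
  have hPx : orthProj K x = ((t : ℝ) : ℂ) • (u : H) := by
    have h0 : ((schurAt W K ((t : ℝ) : ℂ) u : K) : H) = orthProj K x := rfl
    rw [← hfb_eq, hfu] at h0
    rw [← h0, Submodule.coe_smul]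
  have hAx : A x = (u : H) := by
    have h1 : A * Rv = 1 := Ring.mul_inverse_cancel A hA
    have h2 : (A * Rv) (u : H) = A x := rfl
    have h3 : (1 : H →L[ℂ] H) (u : H) = (u : H) := rfl
    rw [h1, h3] at h2
    exact h2.symm
  have hWx : W x = ((t : ℝ) : ℂ) • x := by
    have h2 : W x - ((t : ℝ) : ℂ) • (x - orthProj K x) = (u : H) := by
      simpa [hAdef, ContinuousLinearMap.sub_apply, ContinuousLinearMap.smul_apply,
        ContinuousLinearMap.one_apply] using hAx
    have h3 : ((t : ℝ) : ℂ) • orthProj K x = (u : H) := by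
      rw [hPx, smul_smul, ht2c, one_smul]
    calc W x = (W x - ((t : ℝ) : ℂ) • (x - orthProj K x))
          - ((t : ℝ) : ℂ) • orthProj K x + ((t : ℝ) : ℂ) • x := by
          rw [smul_sub]; abel
      _ = ((t : ℝ) : ℂ) • x := by rw [h2, h3]; abel
  have hxne : x ≠ 0 := by
    intro h0
    rw [h0, map_zero] at hPx
    have h1 : (u : H) = 0 := by
      rcases smul_eq_zero.mp hPx.symm with h | h
      · exact absurd h htne
      · exact h
    exact hu (Subtype.ext h1)
  exact hno ⟨x, hxne, hWx⟩

end Backward2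



/-- For a unitary `W` with essential gaps around `±1` and a
finite-dimensional cyclic subspace `H_C` with Schur function `f` (whose boundary values
`f(±1)` exist as radial limits): `+1` is an eigenvalue of `W` iff `+1` is an eigenvalue
of `f(1)`, and `-1` is an eigenvalue of `W` iff `-1` is an eigenvalue of `f(-1)`. -/
theorem statement6
    (W : H →L[ℂ] H) (hW : W ∈ unitary (H →L[ℂ] H))
    (hgap1 : InEssentialGap W 1) (hgapm1 : InEssentialGap W (-1))
    (HC : Submodule ℂ H) [FiniteDimensional ℂ HC]
    (hcyc : cyclicSubspace W HC = ⊤)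
    (f1 fm1 : HC →L[ℂ] HC)
    (hf1 : Tendsto (fun r : ℝ => schurAt W HC (r : ℂ))
      (nhdsWithin (1 : ℝ) (Set.Ioo (-1 : ℝ) 1)) (nhds f1))
    (hfm1 : Tendsto (fun r : ℝ => schurAt W HC (r : ℂ))
      (nhdsWithin (-1 : ℝ) (Set.Ioo (-1 : ℝ) 1)) (nhds fm1)) :
    ((∃ v : H, v ≠ 0 ∧ W v = v) ↔ (∃ u : HC, u ≠ 0 ∧ f1 u = u)) ∧
    ((∃ v : H, v ≠ 0 ∧ W v = -v) ↔ (∃ u : HC, u ≠ 0 ∧ fm1 u = -u)) := by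
  have hone : (((1 : ℝ) : ℝ) : ℂ) = 1 := by norm_num
  have hmone : (((-1 : ℝ) : ℝ) : ℂ) = -1 := by norm_num
  constructor
  · constructor
    · rintro ⟨v, hv, hWv⟩
      have hWv' : W v = (((1 : ℝ) : ℝ) : ℂ) • v := by rw [hone, one_smul]; exact hWv
      obtain ⟨u, hu, hfu⟩ := forward_eigen W HC hW hcyc 1 (Or.inl rfl) f1 hf1 v hv hWv'
      refine ⟨u, hu, ?_⟩
      rw [hfu, hone, one_smul]
    · rintro ⟨u, hu, hfu⟩
      have hgap : InEssentialGap W (((1 : ℝ) : ℝ) : ℂ) := by rw [hone]; exact hgap1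
      have hfu' : f1 u = (((1 : ℝ) : ℝ) : ℂ) • u := by rw [hone, one_smul]; exact hfu
      obtain ⟨v, hv, hWv⟩ := backward_eigen W HC hW 1 (Or.inl rfl) hgap f1 hf1 u hu hfu'
      refine ⟨v, hv, ?_⟩
      rw [hWv, hone, one_smul]
  · constructor
    · rintro ⟨v, hv, hWv⟩
      have hWv' : W v = (((-1 : ℝ) : ℝ) : ℂ) • v := by
        rw [hmone, neg_smul, one_smul]; exact hWv
      obtain ⟨u, hu, hfu⟩ := forward_eigen W HC hW hcyc (-1) (Or.inr rfl) fm1 hfm1 v hv hWv'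
      refine ⟨u, hu, ?_⟩
      rw [hfu, hmone, neg_smul, one_smul]
    · rintro ⟨u, hu, hfu⟩
      have hgap : InEssentialGap W (((-1 : ℝ) : ℝ) : ℂ) := by rw [hmone]; exact hgapm1
      have hfu' : fm1 u = (((-1 : ℝ) : ℝ) : ℂ) • u := by
        rw [hmone, neg_smul, one_smul]; exact hfu
      obtain ⟨v, hv, hWv⟩ := backward_eigen W HC hW (-1) (Or.inr rfl) hgap fm1 hfm1 u hu hfu'
      refine ⟨v, hv, ?_⟩
      rw [hWv, hmone, neg_smul, one_smul]
end

section
/- Let W and V be unitary operators on a complex Hilbert space H, let H_V denote the closure of the range of V − 1, and let H_C be a closed subspace with H_V ⊂ H_C. Then H_C generates the same cyclic subspace with respect to W and with respect to VW: the closed linear span of ⋃_{n∈ℤ} Wⁿ H_C equals the closed linear span of ⋃_{n∈ℤ} (VW)ⁿ H_C. -/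
open Complex Filter Set Metric

variable {H : Type*} [NormedAddCommGroup H] [InnerProductSpace ℂ H] [CompleteSpace H]

lemma le_cyclic (W : H →L[ℂ] H) (K : Submodule ℂ H) : K ≤ cyclicSubspace W K := by
  have h : K ≤ ⨆ n : ℕ, Submodule.map ((W ^ n : H →L[ℂ] H) : H →ₗ[ℂ] H) K ⊔ Submodule.map (((star W) ^ n : H →L[ℂ] H) : H →ₗ[ℂ] H) K := by
    refine le_trans ?_ (le_iSup _ 0)
    refine le_trans ?_ le_sup_left
    intro x hx
    exact ⟨x, hx, by simp⟩
  exact h.trans (Submodule.le_topologicalClosure _)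

lemma cyclic_star (W : H →L[ℂ] H) (K : Submodule ℂ H) :
    cyclicSubspace (star W) K = cyclicSubspace W K := by
  unfold cyclicSubspace
  simp only [star_star]
  congr 1
  exact iSup_congr fun n => sup_comm _ _

lemma cyclic_map_mem (W : H →L[ℂ] H) (hW : W ∈ unitary (H →L[ℂ] H)) (K : Submodule ℂ H)
    {x : H} (hx : x ∈ cyclicSubspace W K) : W x ∈ cyclicSubspace W K := by
  set S : Submodule ℂ H := ⨆ n : ℕ, Submodule.map ((W ^ n : H →L[ℂ] H) : H →ₗ[ℂ] H) K ⊔ Submodule.map (((star W) ^ n : H →L[ℂ] H) : H →ₗ[ℂ] H) K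
  have hWsW : W * star W = 1 := (Unitary.mem_iff.mp hW).2
  have key : ∀ y ∈ S, W y ∈ S := by
    intro y hy
    refine Submodule.iSup_induction _ (motive := fun y => W y ∈ S) hy ?_ (by simp) ?_
    · intro n z hz
      rcases Submodule.mem_sup.mp hz with ⟨a, ha, b, hb, rfl⟩
      rcases ha with ⟨k, hk, rfl⟩
      rcases hb with ⟨m, hm, rfl⟩
      rw [map_add]
      refine Submodule.add_mem _ ?_ ?_
      · have : W ((W ^ n) k) = (W ^ (n + 1)) k := by
          rw [pow_succ']; rfl
        change W ((W ^ n) k) ∈ S; rw [this]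
        exact Submodule.mem_iSup_of_mem (n + 1) (Submodule.mem_sup_left ⟨k, hk, rfl⟩)
      · cases n with
        | zero =>
          simp only [pow_zero, ContinuousLinearMap.one_apply]
          have : W m = (W ^ 1) m := by simp
          change W m ∈ S; rw [this]
          exact Submodule.mem_iSup_of_mem 1 (Submodule.mem_sup_left ⟨m, hm, rfl⟩)
        | succ j =>
          have : W (((star W) ^ (j + 1)) m) = ((star W) ^ j) m := by
            rw [pow_succ']
            have : ((star W * (star W) ^ j) m) = star W (((star W) ^ j) m) := rfl
            rw [this]
            have h2 : W (star W (((star W) ^ j) m)) = (W * star W) (((star W) ^ j) m) := rfl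
            rw [h2, hWsW]; rfl
          change W (((star W) ^ (j + 1)) m) ∈ S; rw [this]
          exact Submodule.mem_iSup_of_mem j (Submodule.mem_sup_right ⟨m, hm, rfl⟩)
    · intro a b ha hb
      rw [map_add]; exact Submodule.add_mem _ ha hb
  have hxcl : x ∈ closure (S : Set H) := hx
  have : W x ∈ closure (S : Set H) :=
    map_mem_closure W.continuous hxcl key
  exact this

lemma cyclic_le (W : H →L[ℂ] H) (K M : Submodule ℂ H) (hM : IsClosed (M : Set H))
    (hK : K ≤ M) (h1 : ∀ x ∈ M, W x ∈ M) (h2 : ∀ x ∈ M, star W x ∈ M) :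
    cyclicSubspace W K ≤ M := by
  unfold cyclicSubspace
  refine Submodule.topologicalClosure_minimal _ ?_ hM
  refine iSup_le fun n => sup_le ?_ ?_
  · rintro _ ⟨k, hk, rfl⟩
    induction n with
    | zero => simpa using hK hk
    | succ j ih =>
      have : (W ^ (j + 1)) k = W ((W ^ j) k) := by rw [pow_succ']; rfl
      change (W ^ (j + 1)) k ∈ M; rw [this]; exact h1 _ ih
  · rintro _ ⟨k, hk, rfl⟩
    induction n with
    | zero => simpa using hK hk
    | succ j ih =>
      have : ((star W) ^ (j + 1)) k = star W (((star W) ^ j) k) := by rw [pow_succ']; rfl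
      change ((star W) ^ (j + 1)) k ∈ M; rw [this]; exact h2 _ ih


/-- If the perturbation subspace `H_V = closure (range (V - 1))` of a
unitary `V` is contained in a closed subspace `H_C`, then `H_C` generates the same cyclic
subspace with respect to `W` and with respect to `VW`. -/
theorem statement12
    (W V : H →L[ℂ] H) (hW : W ∈ unitary (H →L[ℂ] H)) (hV : V ∈ unitary (H →L[ℂ] H))
    (HC : Submodule ℂ H) (hHCclosed : IsClosed (HC : Set H))
    (hHV : (LinearMap.range ((V - 1 : H →L[ℂ] H) : H →ₗ[ℂ] H)).topologicalClosure ≤ HC) :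
    cyclicSubspace W HC = cyclicSubspace (V ∘L W) HC := by
  set U : H →L[ℂ] H := V ∘L W with hUdef
  have hUmul : U = V * W := rfl
  have hU : U ∈ unitary (H →L[ℂ] H) := by rw [hUmul]; exact mul_mem hV hW
  have hVV : star V * V = 1 := (Unitary.mem_iff.mp hV).1
  have hVV' : V * star V = 1 := (Unitary.mem_iff.mp hV).2
  -- basic membership facts
  have hVmem : ∀ x : H, V x - x ∈ HC := by
    intro x
    refine hHV (Submodule.le_topologicalClosure _ ⟨x, ?_⟩)
    simp [ContinuousLinearMap.sub_apply]
  have hVstar : ∀ x : H, star V x - x ∈ HC := by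
    intro x
    have hfix : V (star V x) = x := by
      have : (V * star V) x = (1 : H →L[ℂ] H) x := by rw [hVV']
      simpa using this
    have h : star V x - x = -(V (star V x) - star V x) := by
      rw [hfix]; abel
    rw [h]
    exact neg_mem (hVmem _)
  set A := cyclicSubspace W HC with hA
  set B := cyclicSubspace U HC with hB
  have hAB : A ≤ B := by
    refine cyclic_le W HC B (by rw [hB, cyclicSubspace]; exact Submodule.isClosed_topologicalClosure _ : IsClosed (B : Set H)) (le_cyclic U HC) ?_ ?_
    · intro x hx
      have h1 : U x ∈ B := cyclic_map_mem U hU HC hx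
      have h2 : V (W x) - W x ∈ B := le_cyclic U HC (hVmem (W x))
      have h3 : W x = U x - (V (W x) - W x) := by
        have : U x = V (W x) := rfl
        rw [this]; abel
      rw [h3]
      exact Submodule.sub_mem _ h1 h2
    · intro x hx
      have hBstar : cyclicSubspace (star U) HC = B := cyclic_star U HC
      have hmap : ∀ y ∈ B, star U y ∈ B := by
        intro y hy
        have := cyclic_map_mem (star U) (Unitary.star_mem hU) HC (by rw [hBstar]; exact hy)
        rwa [hBstar] at this
      have h1 : star U x ∈ B := hmap x hx
      have h2 : star U (V x - x) ∈ B := hmap _ (le_cyclic U HC (hVmem x))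
      have key : star W x = star U x + star U (V x - x) := by
        have e1 : star U (V x) = star W x := by
          rw [hUmul, star_mul]
          have : (star W * star V) (V x) = star W (star V (V x)) := rfl
          rw [this]
          have h3 : star V (V x) = x := by
            have : (star V * V) x = (1 : H →L[ℂ] H) x := by rw [hVV]
            simpa using this
          rw [h3]
        have e2 : V x = x + (V x - x) := by abel
        calc star W x = star U (V x) := e1.symm
          _ = star U (x + (V x - x)) := by rw [← e2]
          _ = star U x + star U (V x - x) := map_add _ _ _
      rw [key]
      exact Submodule.add_mem _ h1 h2
  have hBA : B ≤ A := by
    refine cyclic_le U HC A (by rw [hA, cyclicSubspace]; exact Submodule.isClosed_topologicalClosure _ : IsClosed (A : Set H)) (le_cyclic W HC) ?_ ?_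
    · intro x hx
      have h1 : W x ∈ A := cyclic_map_mem W hW HC hx
      have h2 : V (W x) - W x ∈ A := le_cyclic W HC (hVmem (W x))
      have h3 : U x = W x + (V (W x) - W x) := by
        have : U x = V (W x) := rfl
        rw [this]; abel
      rw [h3]
      exact Submodule.add_mem _ h1 h2
    · intro x hx
      have hAstar : cyclicSubspace (star W) HC = A := cyclic_star W HC
      have hmap : ∀ y ∈ A, star W y ∈ A := by
        intro y hy
        have := cyclic_map_mem (star W) (Unitary.star_mem hW) HC
          (by rw [hAstar]; exact hy)
        rwa [hAstar] at this
      have h1 : star W x ∈ A := hmap x hx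
      have h2 : star W (star V x - x) ∈ A := hmap _ (le_cyclic W HC (hVstar x))
      have key : star U x = star W x + star W (star V x - x) := by
        have e1 : star U x = star W (star V x) := by
          rw [hUmul, star_mul]; rfl
        have e2 : star V x = x + (star V x - x) := by abel
        rw [e1]
        conv_lhs => rw [e2]
        rw [map_add]
      rw [key]
      exact Submodule.add_mem _ h1 h2
  exact le_antisymm hAB hBA
end

section
/- Let H = ℓ²(ℤ) ⊗ ℂ^{2d} with orthonormal basis {|x↑r⟩, |x↓r⟩ : x ∈ ℤ, r = 1,…,d}, let S_↑ and S_↓ be the partial shifts (S_↑|x↑r⟩ = |x+1↑r⟩, S_↑|x↓r⟩ = |x↓r⟩, S_↓|x↑r⟩ = |x↑r⟩, S_↓|x↓r⟩ = |x−1↓r⟩), and for i = 1,2 let C_i = ⊕_{x∈ℤ} C_{i,x} where each 2d×2d matrix C_{i,x} has d×d blocks C_{i,x} = [[A_{i,x}, B̂_{i,x}],[B_{i,x}, A_{i,x}*]] with A_{i,x} invertible, B_{i,x}* = B_{i,x}, B̂_{i,x} = −A_{i,x} B_{i,x} A_{i,x}⁻¹, and A_{i,x}* A_{i,x} + B_{i,x}²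 = 1_d. Then the operators γ = ⊕_{x∈ℤ} γ_x with γ_x = [[B_{1,x}, A_{1,x}*],[A_{1,x}, B̂_{1,x}]] acting on the cell H_x = span{|x↑r⟩,|x↓r⟩ : r} and γ̃ = ⊕_{x∈ℤ} γ̃_x with γ̃_x = [[B_{2,x}, A_{2,x}*],[A_{2,x}, B̂_{2,x}]] acting on H̃_x = span{|x−1↓r⟩,|x↑r⟩ : r} are self-adjoint unitary operators, W = S_↓ C_2 S_↑ C_1 satisfies W = γ̃ γ, and consequently W is unitary and γ is a chiral symmetry of W: γ² = 1 and γWγ* = W*. Moreover each γ_x is traceless. -/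
/-!
Write `γ_x = [[B, A*], [A, B̂]]` and `C_x = [[A, B̂], [B, A*]]` for one cell. The coin relations
(`A` invertible, `B = B*`, `B̂ = -A B A⁻¹`, `A* A + B² = 1`) imply `B̂* = B̂` and the block
identities `A B + B̂ A = 0`, `B A* + A* B̂ = 0`, `A A* + B̂² = 1`; together with `A* A + B² = 1`
they say at once that `γ_x` is a Hermitian involution and that `C_x γ_x` is the flip `↑ ↔ ↓`.
Hence `γ` and `γ̃`, which act blockwise on the cells `H_x` and `H̃_x` of two orthonormal bases,
are self-adjoint unitaries, and on basis vectors `W γ = S_↓ C₂ S_↑ (C₁ γ)` acts as `γ̃`, so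
`W = γ̃ γ`. Unitarity of `W` and `γ W γ* = W*` follow formally from `γ² = γ̃² = 1`, and
`tr γ_x = tr B - tr (A B A⁻¹) = 0`.
-/

open Complex Filter Set Metric Matrix

variable {H : Type*} [NormedAddCommGroup H] [InnerProductSpace ℂ H] [CompleteSpace H] {d : ℕ}

/-- The cell `H_x = span {|x↑r⟩, |x↓r⟩ : r}` of the lattice Hilbert space
`ℓ²(ℤ) ⊗ ℂ^{2d}` with orthonormal basis `e`, where `true = ↑` and `false = ↓`. -/
def cell (e : ℤ × Bool × Fin d → H) (x : ℤ) : Submodule ℂ H :=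
  Submodule.span ℂ (e '' {p : ℤ × Bool × Fin d | p.1 = x})

/-- The shifted cell `H̃_x = span {|x-1,↓,r⟩, |x,↑,r⟩ : r}`. -/
def tcell (e : ℤ × Bool × Fin d → H) (x : ℤ) : Submodule ℂ H :=
  Submodule.span ℂ (e '' {p : ℤ × Bool × Fin d |
    (p.1 = x - 1 ∧ p.2.1 = false) ∨ (p.1 = x ∧ p.2.1 = true)})

open scoped InnerProductSpace

structure IsCoinBlock {n : Type*} [Fintype n] [DecidableEq n] (A B Bhat : Matrix n n ℂ) : Prop where
  isUnit : IsUnit A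
  isHermitian : B.IsHermitian
  bhat_eq : Bhat = -(A * B * A⁻¹)
  normalized : Aᴴ * A + B * B = 1

namespace IsCoinBlock

variable {n : Type*} [Fintype n] [DecidableEq n] {A B Bhat : Matrix n n ℂ}
  (h : IsCoinBlock A B Bhat)
include h

lemma mul_inv : A * A⁻¹ = 1 := A.mul_nonsing_inv ((isUnit_iff_isUnit_det A).1 h.isUnit)

lemma inv_mul : A⁻¹ * A = 1 := A.nonsing_inv_mul ((isUnit_iff_isUnit_det A).1 h.isUnit)

lemma mul_add_bhat_mul : A * B + Bhat * A = 0 := by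
  rw [h.bhat_eq, neg_mul, Matrix.mul_assoc _ A⁻¹, h.inv_mul, Matrix.mul_one, add_neg_cancel]

lemma conjTranspose_mul_bhat : Aᴴ * Bhat = -(B * Aᴴ) := by
  have hcomm : Aᴴ * A * B = B * (Aᴴ * A) := by
    rw [eq_sub_of_add_eq h.normalized]; noncomm_ring
  calc Aᴴ * Bhat = -(Aᴴ * A * B * A⁻¹) := by rw [h.bhat_eq]; noncomm_ring
    _ = -(B * Aᴴ * (A * A⁻¹)) := by rw [hcomm]; noncomm_ring
    _ = -(B * Aᴴ) := by rw [h.mul_inv, Matrix.mul_one]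

lemma mul_conjTranspose_add_bhat_mul_bhat : A * Aᴴ + Bhat * Bhat = 1 := by
  have hAAH : A * Aᴴ = A * (Aᴴ * A) * A⁻¹ := by
    simp only [Matrix.mul_assoc, h.mul_inv, Matrix.mul_one]
  have hBhat : Bhat * Bhat = A * (B * B) * A⁻¹ := by
    rw [h.bhat_eq, neg_mul_neg]
    simp only [Matrix.mul_assoc]
    rw [← Matrix.mul_assoc A⁻¹ A, h.inv_mul, Matrix.one_mul]
  rw [hAAH, hBhat, ← add_mul, ← Matrix.mul_add, h.normalized, Matrix.mul_one, h.mul_inv]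

lemma bhat_isHermitian : Bhat.IsHermitian := by
  have hAH : IsUnit Aᴴ := by simpa using h.isUnit.star
  have hAH_inv : Aᴴ * Aᴴ⁻¹ = 1 := Aᴴ.mul_nonsing_inv ((isUnit_iff_isUnit_det _).1 hAH)
  refine (hAH.mul_left_cancel ?_ : Bhatᴴ = Bhat)
  rw [h.conjTranspose_mul_bhat, h.bhat_eq, conjTranspose_neg, conjTranspose_mul, conjTranspose_mul,
    conjTranspose_nonsing_inv, h.isHermitian.eq, Matrix.mul_neg, ← Matrix.mul_assoc,
    ← Matrix.mul_assoc, hAH_inv, Matrix.one_mul]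

lemma chiral_isHermitian : (fromBlocks B Aᴴ A Bhat).IsHermitian :=
  h.isHermitian.fromBlocks (conjTranspose_conjTranspose A) h.bhat_isHermitian

lemma chiral_mul_self : fromBlocks B Aᴴ A Bhat * fromBlocks B Aᴴ A Bhat = 1 := by
  rw [fromBlocks_multiply, ← fromBlocks_one, add_comm (B * B), h.normalized,
    h.conjTranspose_mul_bhat, add_neg_cancel, h.mul_add_bhat_mul,
    h.mul_conjTranspose_add_bhat_mul_bhat]

lemma coin_mul_chiral : fromBlocks A Bhat B Aᴴ * fromBlocks B Aᴴ A Bhat = fromBlocks 0 1 1 0 := by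
  rw [fromBlocks_multiply, add_comm (B * B), h.normalized,
    h.conjTranspose_mul_bhat, add_neg_cancel, h.mul_add_bhat_mul,
    h.mul_conjTranspose_add_bhat_mul_bhat]

lemma trace_add_trace_bhat : B.trace + Bhat.trace = 0 := by
  rw [h.bhat_eq, trace_neg, trace_mul_cycle, h.inv_mul, Matrix.one_mul, add_neg_cancel]

end IsCoinBlock

section InnerProductSpace

variable {E : Type*} [NormedAddCommGroup E] [InnerProductSpace ℂ E]

section DenseSpan

variable {ι : Type*} {v : ι → E} (hv : (Submodule.span ℂ (Set.range v)).topologicalClosure = ⊤)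
include hv

lemma ContinuousLinearMap.ext_of_dense_span {F : Type*} [NormedAddCommGroup F] [NormedSpace ℂ F]
    {T T' : E →L[ℂ] F} (h : ∀ i, T (v i) = T' (v i)) : T = T' :=
  ContinuousLinearMap.ext_on (Submodule.dense_iff_topologicalClosure_eq_top.2 hv)
    (by rintro _ ⟨i, rfl⟩; exact h i)

lemma isSelfAdjoint_of_inner_dense_span [CompleteSpace E] {T : E →L[ℂ] E}
    (h : ∀ i j, ⟪T (v i), v j⟫_ℂ = ⟪v i, T (v j)⟫_ℂ) : IsSelfAdjoint T := by
  refine ContinuousLinearMap.isSelfAdjoint_iff'.2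
    (ContinuousLinearMap.ext_of_dense_span hv fun j => ext_inner_right ℂ fun w => ?_)
  have : innerSL ℂ (T.adjoint (v j)) = innerSL ℂ (T (v j)) :=
    ContinuousLinearMap.ext_of_dense_span hv fun i => by
      simp [ContinuousLinearMap.adjoint_inner_left, h]
  exact congr($this w)

end DenseSpan

section Blockwise

variable {X κ : Type*} [Fintype κ]

def ActsBlockwise (T : E →L[ℂ] E) (f : X × κ → E) (M : X → Matrix κ κ ℂ) : Prop :=
  ∀ x k, T (f (x, k)) = ∑ l, M x l k • f (x, l)

namespace ActsBlockwise

variable {f : X × κ → E} {S T : E →L[ℂ] E} {M N : X → Matrix κ κ ℂ}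

lemma comp (hS : ActsBlockwise S f N) (hT : ActsBlockwise T f M) :
    ActsBlockwise (S ∘L T) f (fun x => N x * M x) := by
  intro x k
  simp only [ContinuousLinearMap.comp_apply, hT x k, map_sum, map_smul, hS x, Finset.smul_sum,
    smul_smul, Matrix.mul_apply, Finset.sum_smul]
  rw [Finset.sum_comm]
  simp_rw [mul_comm]

lemma one [DecidableEq κ] : ActsBlockwise (1 : E →L[ℂ] E) f (fun _ => 1) := by
  intro x k
  simp [Matrix.one_apply]

lemma eq (hf : (Submodule.span ℂ (Set.range f)).topologicalClosure = ⊤)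
    (hS : ActsBlockwise S f M) (hT : ActsBlockwise T f M) : S = T :=
  ContinuousLinearMap.ext_of_dense_span hf fun ⟨x, k⟩ => by rw [hS x k, hT x k]

lemma inner_apply [DecidableEq X] (hf : Orthonormal ℂ f) (hT : ActsBlockwise T f M)
    (x y : X) (k l : κ) : ⟪f (y, l), T (f (x, k))⟫_ℂ = if y = x then M x l k else 0 := by
  classical
  simp only [hT x k, inner_sum, inner_smul_right, orthonormal_iff_ite.1 hf, Prod.mk.injEq]
  split_ifs with hyx <;> simp [hyx]

lemma isSelfAdjoint [CompleteSpace E] (hf : Orthonormal ℂ f)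
    (hspan : (Submodule.span ℂ (Set.range f)).topologicalClosure = ⊤)
    (hT : ActsBlockwise T f M) (hM : ∀ x, (M x).IsHermitian) : IsSelfAdjoint T := by
  classical
  refine isSelfAdjoint_of_inner_dense_span hspan fun ⟨x, k⟩ ⟨y, l⟩ => ?_
  rw [← inner_conj_symm, hT.inner_apply hf, hT.inner_apply hf]
  split_ifs with hxy hyx hyx
  · subst hxy; exact (hM _).apply _ _
  · exact absurd hxy.symm hyx
  · exact absurd hyx.symm hxy
  · simp

lemma fromBlocks {κ₁ κ₂ : Type*} [Fintype κ₁] [Fintype κ₂] {f : X × (κ₁ ⊕ κ₂) → E}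
    {P : X → Matrix κ₁ κ₁ ℂ} {Q : X → Matrix κ₁ κ₂ ℂ} {R : X → Matrix κ₂ κ₁ ℂ}
    {S : X → Matrix κ₂ κ₂ ℂ}
    (hinl : ∀ x i, T (f (x, .inl i)) =
      (∑ j, P x j i • f (x, .inl j)) + ∑ j, R x j i • f (x, .inr j))
    (hinr : ∀ x i, T (f (x, .inr i)) =
      (∑ j, Q x j i • f (x, .inl j)) + ∑ j, S x j i • f (x, .inr j)) :
    ActsBlockwise T f (fun x => Matrix.fromBlocks (P x) (Q x) (R x) (S x)) := by
  rintro x (i | i) <;> simp [Fintype.sum_sum_type, hinl, hinr]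

lemma flip_apply {κ₀ : Type*} [Fintype κ₀] [DecidableEq κ₀] {f : X × (κ₀ ⊕ κ₀) → E}
    (hT : ActsBlockwise T f (fun _ => Matrix.fromBlocks 0 1 1 0)) (x : X) (i : κ₀) :
    T (f (x, .inl i)) = f (x, .inr i) ∧ T (f (x, .inr i)) = f (x, .inl i) := by
  simp [hT x, Fintype.sum_sum_type, Matrix.one_apply]

end ActsBlockwise

end Blockwise

lemma shift_coin_shift_comp_flip (e : ℤ × Bool × Fin d → E)
    (hspan : (Submodule.span ℂ (Set.range e)).topologicalClosure = ⊤)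
    (Sup Sdn C γt F : E →L[ℂ] E) (A B Bhat : ℤ → Matrix (Fin d) (Fin d) ℂ)
    (hF_up : ∀ x r, F (e (x, true, r)) = e (x, false, r))
    (hF_dn : ∀ x r, F (e (x, false, r)) = e (x, true, r))
    (hSup_up : ∀ x r, Sup (e (x, true, r)) = e (x + 1, true, r))
    (hSup_dn : ∀ x r, Sup (e (x, false, r)) = e (x, false, r))
    (hSdn_up : ∀ x r, Sdn (e (x, true, r)) = e (x, true, r))
    (hSdn_dn : ∀ x r, Sdn (e (x, false, r)) = e (x - 1, false, r))
    (hCu : ∀ x r, C (e (x, true, r)) =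
      (∑ s, A x s r • e (x, true, s)) + ∑ s, B x s r • e (x, false, s))
    (hCd : ∀ x r, C (e (x, false, r)) =
      (∑ s, Bhat x s r • e (x, true, s)) +
        ∑ s, (starRingEnd ℂ) (A x r s) • e (x, false, s))
    (hγtd : ∀ x r, γt (e (x - 1, false, r)) =
      (∑ s, B x s r • e (x - 1, false, s)) + ∑ s, A x s r • e (x, true, s))
    (hγtu : ∀ x r, γt (e (x, true, r)) =
      (∑ s, (starRingEnd ℂ) (A x r s) • e (x - 1, false, s)) +
        ∑ s, Bhat x s r • e (x, true, s)) :
    Sdn ∘L C ∘L Sup ∘L F = γt := by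
  refine ContinuousLinearMap.ext_of_dense_span hspan ?_
  rintro ⟨x, _ | _, r⟩
  · have hγt_dn := hγtd (x + 1) r
    simp only [add_sub_cancel_right] at hγt_dn
    simp [hγt_dn, hF_dn, hSup_up, hCu, hSdn_up, hSdn_dn, add_comm]
  · simp [hγtu, hF_up, hSup_dn, hCd, hSdn_up, hSdn_dn, add_comm]

end InnerProductSpace

lemma IsSelfAdjoint.mem_unitary_of_mul_self {R : Type*} [Monoid R] [StarMul R] {a : R}
    (ha : IsSelfAdjoint a) (h : a * a = 1) : a ∈ unitary R :=
  Unitary.mem_iff.2 (by rw [ha.star_eq]; exact ⟨h, h⟩)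

lemma IsSelfAdjoint.conj_mul_eq_star {R : Type*} [Monoid R] [StarMul R] {a b : R}
    (ha : IsSelfAdjoint a) (hb : IsSelfAdjoint b) (h : a * a = 1) :
    a * (b * a) * star a = star (b * a) := by
  rw [star_mul, ha.star_eq, hb.star_eq, mul_assoc, mul_assoc, h, mul_one]

/-- The cell `H_x` with its basis ordered `↑` (`inl`) before `↓` (`inr`). -/
def cellIndex : ℤ × (Fin d ⊕ Fin d) ≃ ℤ × Bool × Fin d where
  toFun
    | (x, .inl r) => (x, true, r)
    | (x, .inr r) => (x, false, r)
  invFun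
    | (x, true, r) => (x, .inl r)
    | (x, false, r) => (x, .inr r)
  left_inv := by rintro ⟨x, r | r⟩ <;> rfl
  right_inv := by rintro ⟨x, _ | _, r⟩ <;> rfl

/-- The shifted cell `H̃_x` with its basis ordered `|x-1,↓⟩` (`inl`) before `|x,↑⟩` (`inr`). -/
def shiftedCellIndex : ℤ × (Fin d ⊕ Fin d) ≃ ℤ × Bool × Fin d where
  toFun
    | (x, .inl r) => (x - 1, false, r)
    | (x, .inr r) => (x, true, r)
  invFun
    | (x, false, r) => (x + 1, .inl r)
    | (x, true, r) => (x, .inr r)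
  left_inv := by rintro ⟨x, r | r⟩ <;> simp
  right_inv := by rintro ⟨x, _ | _, r⟩ <;> simp

theorem statement14_general
    (e : ℤ × Bool × Fin d → H) (he : Orthonormal ℂ e)
    (hspan : (Submodule.span ℂ (Set.range e)).topologicalClosure = ⊤)
    (Sup Sdn C₁ C₂ γ γt : H →L[ℂ] H)
    (A₁ B₁ Bhat₁ A₂ B₂ Bhat₂ : ℤ → Matrix (Fin d) (Fin d) ℂ)
    (hA₁ : ∀ x, IsUnit (A₁ x)) (hA₂ : ∀ x, IsUnit (A₂ x))
    (hB₁ : ∀ x, (B₁ x).IsHermitian) (hB₂ : ∀ x, (B₂ x).IsHermitian)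
    (hBhat₁ : ∀ x, Bhat₁ x = -(A₁ x * B₁ x * (A₁ x)⁻¹))
    (hBhat₂ : ∀ x, Bhat₂ x = -(A₂ x * B₂ x * (A₂ x)⁻¹))
    (hnorm₁ : ∀ x, (A₁ x)ᴴ * A₁ x + B₁ x * B₁ x = 1)
    (hnorm₂ : ∀ x, (A₂ x)ᴴ * A₂ x + B₂ x * B₂ x = 1)
    (hSup_up : ∀ x r, Sup (e (x, true, r)) = e (x + 1, true, r))
    (hSup_dn : ∀ x r, Sup (e (x, false, r)) = e (x, false, r))
    (hSdn_up : ∀ x r, Sdn (e (x, true, r)) = e (x, true, r))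
    (hSdn_dn : ∀ x r, Sdn (e (x, false, r)) = e (x - 1, false, r))
    (hC₁u : ∀ x r, C₁ (e (x, true, r)) =
      (∑ s, A₁ x s r • e (x, true, s)) + ∑ s, B₁ x s r • e (x, false, s))
    (hC₁d : ∀ x r, C₁ (e (x, false, r)) =
      (∑ s, Bhat₁ x s r • e (x, true, s)) +
        ∑ s, (starRingEnd ℂ) (A₁ x r s) • e (x, false, s))
    (hC₂u : ∀ x r, C₂ (e (x, true, r)) =
      (∑ s, A₂ x s r • e (x, true, s)) + ∑ s, B₂ x s r • e (x, false, s))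
    (hC₂d : ∀ x r, C₂ (e (x, false, r)) =
      (∑ s, Bhat₂ x s r • e (x, true, s)) +
        ∑ s, (starRingEnd ℂ) (A₂ x r s) • e (x, false, s))
    (hγu : ∀ x r, γ (e (x, true, r)) =
      (∑ s, B₁ x s r • e (x, true, s)) + ∑ s, A₁ x s r • e (x, false, s))
    (hγd : ∀ x r, γ (e (x, false, r)) =
      (∑ s, (starRingEnd ℂ) (A₁ x r s) • e (x, true, s)) +
        ∑ s, Bhat₁ x s r • e (x, false, s))
    (hγtd : ∀ x r, γt (e (x - 1, false, r)) =
      (∑ s, B₂ x s r • e (x - 1, false, s)) + ∑ s, A₂ x s r • e (x, true, s))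
    (hγtu : ∀ x r, γt (e (x, true, r)) =
      (∑ s, (starRingEnd ℂ) (A₂ x r s) • e (x - 1, false, s)) +
        ∑ s, Bhat₂ x s r • e (x, true, s)) :
    IsSelfAdjoint γ ∧ γ ∈ unitary (H →L[ℂ] H) ∧
    IsSelfAdjoint γt ∧ γt ∈ unitary (H →L[ℂ] H) ∧
    Sdn ∘L C₂ ∘L Sup ∘L C₁ = γt ∘L γ ∧
    (Sdn ∘L C₂ ∘L Sup ∘L C₁) ∈ unitary (H →L[ℂ] H) ∧
    γ ∘L γ = 1 ∧
    γ ∘L (Sdn ∘L C₂ ∘L Sup ∘L C₁) ∘L star γ = star (Sdn ∘L C₂ ∘L Sup ∘L C₁) ∧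
    (∀ x, (B₁ x).trace + (Bhat₁ x).trace = 0) := by
  have hc₁ x : IsCoinBlock (A₁ x) (B₁ x) (Bhat₁ x) := ⟨hA₁ x, hB₁ x, hBhat₁ x, hnorm₁ x⟩
  have hc₂ x : IsCoinBlock (A₂ x) (B₂ x) (Bhat₂ x) := ⟨hA₂ x, hB₂ x, hBhat₂ x, hnorm₂ x⟩
  have hspan₁ : (Submodule.span ℂ (Set.range (e ∘ cellIndex))).topologicalClosure = ⊤ := by
    rwa [EquivLike.range_comp]
  have hspan₂ : (Submodule.span ℂ (Set.range (e ∘ shiftedCellIndex))).topologicalClosure = ⊤ := by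
    rwa [EquivLike.range_comp]
  have hγ : ActsBlockwise γ (e ∘ cellIndex) fun x => fromBlocks (B₁ x) (A₁ x)ᴴ (A₁ x) (Bhat₁ x) :=
    .fromBlocks hγu hγd
  have hγt : ActsBlockwise γt (e ∘ shiftedCellIndex)
      fun x => fromBlocks (B₂ x) (A₂ x)ᴴ (A₂ x) (Bhat₂ x) :=
    .fromBlocks hγtd hγtu
  have hC₁ : ActsBlockwise C₁ (e ∘ cellIndex) fun x => fromBlocks (A₁ x) (Bhat₁ x) (B₁ x) (A₁ x)ᴴ :=
    .fromBlocks hC₁u hC₁d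
  have hγγ : γ ∘L γ = 1 :=
    (hγ.comp hγ).eq hspan₁ (by simpa only [(hc₁ _).chiral_mul_self] using ActsBlockwise.one)
  have hγtγt : γt ∘L γt = 1 :=
    (hγt.comp hγt).eq hspan₂ (by simpa only [(hc₂ _).chiral_mul_self] using ActsBlockwise.one)
  have hγsa := hγ.isSelfAdjoint (he.comp _ cellIndex.injective) hspan₁
    fun x => (hc₁ x).chiral_isHermitian
  have hγtsa := hγt.isSelfAdjoint (he.comp _ shiftedCellIndex.injective) hspan₂
    fun x => (hc₂ x).chiral_isHermitian
  have hflip : ActsBlockwise (C₁ ∘L γ) (e ∘ cellIndex) fun _ => fromBlocks 0 1 1 0 := by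
    simpa only [(hc₁ _).coin_mul_chiral] using hC₁.comp hγ
  have hWγ : Sdn ∘L C₂ ∘L Sup ∘L (C₁ ∘L γ) = γt :=
    shift_coin_shift_comp_flip e hspan Sup Sdn C₂ γt _ A₂ B₂ Bhat₂
      (fun x r => (hflip.flip_apply x r).1) (fun x r => (hflip.flip_apply x r).2)
      hSup_up hSup_dn hSdn_up hSdn_dn hC₂u hC₂d hγtd hγtu
  have hW : Sdn ∘L C₂ ∘L Sup ∘L C₁ = γt ∘L γ := by
    simp only [← hWγ, ContinuousLinearMap.comp_assoc, hγγ, ContinuousLinearMap.one_def,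
      ContinuousLinearMap.comp_id]
  have hγ_unitary := hγsa.mem_unitary_of_mul_self hγγ
  have hγt_unitary := hγtsa.mem_unitary_of_mul_self hγtγt
  refine ⟨hγsa, hγ_unitary, hγtsa, hγt_unitary, hW, ?_, hγγ, ?_,
    fun x => (hc₁ x).trace_add_trace_bhat⟩
  · rw [hW]; exact mul_mem hγt_unitary hγ_unitary
  · rw [hW]; exact hγsa.conj_mul_eq_star hγtsa hγγ

/-- On `H = ℓ²(ℤ) ⊗ ℂ^{2d}` (an abstract Hilbert space with orthonormal
basis `e` indexed by `ℤ × {↑,↓} × {1,…,d}` with dense span), let `S_↑, S_↓` be the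
partial shifts and `C₁, C₂` cell-wise coins with blocks `[[A_i, B̂_i],[B_i, A_i*]]`
satisfying `A_i x` invertible, `B_i x` hermitian, `B̂_i x = -A_i x · B_i x · (A_i x)⁻¹`
and `(A_i x)ᴴ A_i x + (B_i x)² = 1`. Then the cell-wise operator `γ` with blocks
`[[B₁, A₁*],[A₁, B̂₁]]` on `H_x` and the operator `γ̃` with blocks `[[B₂, A₂*],[A₂, B̂₂]]`
on `H̃_x` are self-adjoint unitaries, `W = S_↓ C₂ S_↑ C₁ = γ̃ γ` is unitary, `γ` is a
chiral symmetry of `W` (`γ² = 1`, `γ W γ* = W*`), and each `γ_x` is traceless. -/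
theorem statement14
    (hd : 0 < d)
    (e : ℤ × Bool × Fin d → H) (he : Orthonormal ℂ e)
    (hspan : (Submodule.span ℂ (Set.range e)).topologicalClosure = ⊤)
    (Sup Sdn C₁ C₂ γ γt : H →L[ℂ] H)
    (A₁ B₁ Bhat₁ A₂ B₂ Bhat₂ : ℤ → Matrix (Fin d) (Fin d) ℂ)
    (hA₁ : ∀ x, IsUnit (A₁ x)) (hA₂ : ∀ x, IsUnit (A₂ x))
    (hB₁ : ∀ x, (B₁ x).IsHermitian) (hB₂ : ∀ x, (B₂ x).IsHermitian)
    (hBhat₁ : ∀ x, Bhat₁ x = -(A₁ x * B₁ x * (A₁ x)⁻¹))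
    (hBhat₂ : ∀ x, Bhat₂ x = -(A₂ x * B₂ x * (A₂ x)⁻¹))
    (hnorm₁ : ∀ x, (A₁ x)ᴴ * A₁ x + B₁ x * B₁ x = 1)
    (hnorm₂ : ∀ x, (A₂ x)ᴴ * A₂ x + B₂ x * B₂ x = 1)
    (hSup_up : ∀ x r, Sup (e (x, true, r)) = e (x + 1, true, r))
    (hSup_dn : ∀ x r, Sup (e (x, false, r)) = e (x, false, r))
    (hSdn_up : ∀ x r, Sdn (e (x, true, r)) = e (x, true, r))
    (hSdn_dn : ∀ x r, Sdn (e (x, false, r)) = e (x - 1, false, r))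
    (hC₁u : ∀ x r, C₁ (e (x, true, r)) =
      (∑ s, A₁ x s r • e (x, true, s)) + ∑ s, B₁ x s r • e (x, false, s))
    (hC₁d : ∀ x r, C₁ (e (x, false, r)) =
      (∑ s, Bhat₁ x s r • e (x, true, s)) +
        ∑ s, (starRingEnd ℂ) (A₁ x r s) • e (x, false, s))
    (hC₂u : ∀ x r, C₂ (e (x, true, r)) =
      (∑ s, A₂ x s r • e (x, true, s)) + ∑ s, B₂ x s r • e (x, false, s))
    (hC₂d : ∀ x r, C₂ (e (x, false, r)) =
      (∑ s, Bhat₂ x s r • e (x, true, s)) +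
        ∑ s, (starRingEnd ℂ) (A₂ x r s) • e (x, false, s))
    (hγu : ∀ x r, γ (e (x, true, r)) =
      (∑ s, B₁ x s r • e (x, true, s)) + ∑ s, A₁ x s r • e (x, false, s))
    (hγd : ∀ x r, γ (e (x, false, r)) =
      (∑ s, (starRingEnd ℂ) (A₁ x r s) • e (x, true, s)) +
        ∑ s, Bhat₁ x s r • e (x, false, s))
    (hγtd : ∀ x r, γt (e (x - 1, false, r)) =
      (∑ s, B₂ x s r • e (x - 1, false, s)) + ∑ s, A₂ x s r • e (x, true, s))
    (hγtu : ∀ x r, γt (e (x, true, r)) =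
      (∑ s, (starRingEnd ℂ) (A₂ x r s) • e (x - 1, false, s)) +
        ∑ s, Bhat₂ x s r • e (x, true, s)) :
    IsSelfAdjoint γ ∧ γ ∈ unitary (H →L[ℂ] H) ∧
    IsSelfAdjoint γt ∧ γt ∈ unitary (H →L[ℂ] H) ∧
    Sdn ∘L C₂ ∘L Sup ∘L C₁ = γt ∘L γ ∧
    (Sdn ∘L C₂ ∘L Sup ∘L C₁) ∈ unitary (H →L[ℂ] H) ∧
    γ ∘L γ = 1 ∧
    γ ∘L (Sdn ∘L C₂ ∘L Sup ∘L C₁) ∘L star γ = star (Sdn ∘L C₂ ∘L Sup ∘L C₁) ∧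
    (∀ x, (B₁ x).trace + (Bhat₁ x).trace = 0) :=
  statement14_general e he hspan Sup Sdn C₁ C₂ γ γt A₁ B₁ Bhat₁ A₂ B₂ Bhat₂ hA₁ hA₂ hB₁ hB₂ hBhat₁
    hBhat₂ hnorm₁ hnorm₂ hSup_up hSup_dn hSdn_up hSdn_dn hC₁u hC₁d hC₂u hC₂d hγu hγd hγtd hγtu
end

section
/- Let H = ℓ²(ℤ) ⊗ ℂ^{2d} and let W = S_↓ C_2 S_↑ C_1 be a unitary of the form of the generalized split-step model: S_↑, S_↓ the partial shifts (S_↑|x↑r⟩ = |x+1↑r⟩, S_↑|x↓r⟩ = |x↓r⟩, S_↓|x↑r⟩ = |x↑r⟩, S_↓|x↓r⟩ = |x−1↓r⟩) and C_i = ⊕_x C_{i,x} with blocks C_{i,x} = [[A_{i,x}, B̂_{i,x}],[B_{i,x}, A_{i,x}*]], A_{i,x} invertible, B_{i,x}* = B_{i,x}, B̂_{i,x} = −A_{i,x}B_{i,x}A_{i,x}⁻¹, A_{i,x}*A_{i,x} + B_{i,x}² = 1_d. Then for every x ∈ ℤ, the cell H_x = span{|x↑r⟩,|x↓r⟩ :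 r = 1,…,d} is cyclic for W, and likewise each subspace H̃_x = span{|x−1↓r⟩,|x↑r⟩ : r = 1,…,d} is cyclic for W. -/
set_option linter.unusedSectionVars false
set_option maxHeartbeats 1000000

open Complex Filter Set Metric Matrix

variable {H : Type*} [NormedAddCommGroup H] [InnerProductSpace ℂ H] [CompleteSpace H] {d : ℕ}

namespace Statement15Aux

local notation "⟪" x ", " y "⟫" => @inner ℂ _ _ x y

/-- vector of a cell with given spin and coefficients -/
noncomputable def svec (e : ℤ × Bool × Fin d → H) (b : Bool) (y : ℤ) (c : Fin d → ℂ) : H :=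
  ∑ s, c s • e (y, b, s)

lemma svec_add (e : ℤ × Bool × Fin d → H) (b : Bool) (y : ℤ) (c c' : Fin d → ℂ) :
    svec e b y c + svec e b y c' = svec e b y (c + c') := by
  simp [svec, ← Finset.sum_add_distrib, add_smul]

lemma svec_zero (e : ℤ × Bool × Fin d → H) (b : Bool) (y : ℤ) :
    svec e b y 0 = 0 := by simp [svec]

lemma svec_single (e : ℤ × Bool × Fin d → H) (b : Bool) (y : ℤ) (r : Fin d) :
    svec e b y (Pi.single r 1) = e (y, b, r) := by
  simp [svec, Pi.single_apply]

lemma svec_mem (e : ℤ × Bool × Fin d → H) {b : Bool} {y : ℤ} {V : Submodule ℂ H}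
    (h : ∀ r, e (y, b, r) ∈ V) (c : Fin d → ℂ) : svec e b y c ∈ V :=
  Submodule.sum_mem _ fun s _ => Submodule.smul_mem _ _ (h s)

lemma sum_smul_expand (M : Matrix (Fin d) (Fin d) ℂ) (c : Fin d → ℂ) (v : Fin d → H) :
    ∑ r, c r • ∑ s, M s r • v s = ∑ s, (M *ᵥ c) s • v s := by
  calc ∑ r, c r • ∑ s, M s r • v s = ∑ r, ∑ s, (M s r * c r) • v s := by
        simp [Finset.smul_sum, smul_smul, mul_comm]
    _ = ∑ s, ∑ r, (M s r * c r) • v s := Finset.sum_comm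
    _ = ∑ s, (M *ᵥ c) s • v s := by
        simp [Matrix.mulVec, dotProduct, Finset.sum_smul]

/-- generic coin action on svec -/
lemma coin_svec (e : ℤ × Bool × Fin d → H) (C : H →L[ℂ] H) (b : Bool)
    (P Q : ℤ → Matrix (Fin d) (Fin d) ℂ)
    (h : ∀ x r, C (e (x, b, r)) =
      (∑ s, P x s r • e (x, true, s)) + ∑ s, Q x s r • e (x, false, s))
    (y : ℤ) (c : Fin d → ℂ) :
    C (svec e b y c) = svec e true y (P y *ᵥ c) + svec e false y (Q y *ᵥ c) := by
  unfold svec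
  rw [map_sum]
  simp only [_root_.map_smul, h, smul_add]
  rw [Finset.sum_add_distrib, sum_smul_expand, sum_smul_expand]

/-- generic shift action on svec -/
lemma shift_svec (e : ℤ × Bool × Fin d → H) (S : H →L[ℂ] H) (b : Bool) (f : ℤ → ℤ)
    (h : ∀ x r, S (e (x, b, r)) = e (f x, b, r)) (y : ℤ) (c : Fin d → ℂ) :
    S (svec e b y c) = svec e b (f y) c := by
  unfold svec; rw [map_sum]; simp only [_root_.map_smul, h]

lemma inner_sum2_right (e : ℤ × Bool × Fin d → H) (he : Orthonormal ℂ e)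
    (M N : Fin d → ℂ) (x y : ℤ) (b : Bool) (s : Fin d) :
    ⟪e (y, b, s), (∑ t, M t • e (x, true, t)) + ∑ t, N t • e (x, false, t)⟫
      = if y = x then (if b then M s else N s) else 0 := by
  have hee := orthonormal_iff_ite.mp he
  simp only [inner_add_right, inner_sum, inner_smul_right, hee]
  by_cases hxy : y = x
  · subst hxy
    cases b <;> simp [Prod.ext_iff, Finset.sum_ite_eq, mul_ite]
  · cases b <;> simp [Prod.ext_iff, hxy]

lemma inner_sum2_left (e : ℤ × Bool × Fin d → H) (he : Orthonormal ℂ e)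
    (M N : Fin d → ℂ) (x y : ℤ) (b : Bool) (s : Fin d) :
    ⟪(∑ t, M t • e (x, true, t)) + ∑ t, N t • e (x, false, t), e (y, b, s)⟫
      = if y = x then (if b then (starRingEnd ℂ) (M s) else (starRingEnd ℂ) (N s)) else 0 := by
  rw [← inner_conj_symm, inner_sum2_right e he M N x y b s]
  rw [apply_ite (starRingEnd ℂ)]
  cases b <;> simp

lemma ext_vec (e : ℤ × Bool × Fin d → H)
    (hspan : (Submodule.span ℂ (Set.range e)).topologicalClosure = ⊤)
    {v w : H} (h : ∀ p, ⟪e p, v⟫ = ⟪e p, w⟫) : v = w := by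
  have hdense : Dense ((Submodule.span ℂ (Set.range e) : Submodule ℂ H) : Set H) :=
    Submodule.dense_iff_topologicalClosure_eq_top.mpr hspan
  refine hdense.eq_of_inner_right (𝕜 := ℂ) ?_
  intro u hu
  induction hu using Submodule.span_induction with
  | mem z hz => obtain ⟨p, rfl⟩ := hz; exact h p
  | zero => simp
  | add a b _ _ ha hb => simp [inner_add_left, ha, hb]
  | smul c a _ ha => simp [inner_smul_left, ha]

/-- adjoint of a coin on basis vectors -/
lemma star_coin (e : ℤ × Bool × Fin d → H) (he : Orthonormal ℂ e)
    (hspan : (Submodule.span ℂ (Set.range e)).topologicalClosure = ⊤)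
    (C : H →L[ℂ] H) (P Q R S : ℤ → Matrix (Fin d) (Fin d) ℂ)
    (hcu : ∀ x r, C (e (x, true, r)) =
      (∑ s, P x s r • e (x, true, s)) + ∑ s, Q x s r • e (x, false, s))
    (hcd : ∀ x r, C (e (x, false, r)) =
      (∑ s, R x s r • e (x, true, s)) + ∑ s, S x s r • e (x, false, s)) :
    (∀ x r, (star C) (e (x, true, r)) =
      (∑ s, (P x)ᴴ s r • e (x, true, s)) + ∑ s, (R x)ᴴ s r • e (x, false, s)) ∧
    (∀ x r, (star C) (e (x, false, r)) =
      (∑ s, (Q x)ᴴ s r • e (x, true, s)) + ∑ s, (S x)ᴴ s r • e (x, false, s)) := by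
  have key : ∀ (b₀ : Bool) (x : ℤ) (r : Fin d),
      (star C) (e (x, b₀, r)) =
      (∑ s, (if b₀ then (P x)ᴴ else (Q x)ᴴ) s r • e (x, true, s)) +
        ∑ s, (if b₀ then (R x)ᴴ else (S x)ᴴ) s r • e (x, false, s) := by
    intro b₀ x r
    apply ext_vec e hspan
    rintro ⟨y, b, s⟩
    rw [ContinuousLinearMap.star_eq_adjoint, ContinuousLinearMap.adjoint_inner_right]
    rw [inner_sum2_right e he _ _ x y b s]
    cases b
    · rw [hcd y s, inner_sum2_left e he _ _ y x b₀ r]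
      by_cases hxy : y = x
      · subst hxy
        cases b₀ <;> simp [Matrix.conjTranspose_apply, RCLike.star_def]
      · simp [hxy, Ne.symm hxy]
    · rw [hcu y s, inner_sum2_left e he _ _ y x b₀ r]
      by_cases hxy : y = x
      · subst hxy
        cases b₀ <;> simp [Matrix.conjTranspose_apply, RCLike.star_def]
      · simp [hxy, Ne.symm hxy]
  exact ⟨fun x r => by simpa using key true x r, fun x r => by simpa using key false x r⟩

/-- adjoint of a (spin-preserving) cell shift on basis vectors -/
lemma star_shift (e : ℤ × Bool × Fin d → H) (he : Orthonormal ℂ e)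
    (hspan : (Submodule.span ℂ (Set.range e)).topologicalClosure = ⊤)
    (T : H →L[ℂ] H) (a c : ℤ)
    (h1 : ∀ x r, T (e (x, true, r)) = e (x + a, true, r))
    (h2 : ∀ x r, T (e (x, false, r)) = e (x + c, false, r)) :
    (∀ x r, (star T) (e (x, true, r)) = e (x - a, true, r)) ∧
    (∀ x r, (star T) (e (x, false, r)) = e (x - c, false, r)) := by
  have hee := orthonormal_iff_ite.mp he
  constructor
  · intro x r
    apply ext_vec e hspan
    rintro ⟨y, b, s⟩
    rw [ContinuousLinearMap.star_eq_adjoint, ContinuousLinearMap.adjoint_inner_right]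
    cases b
    · rw [h2 y s]; simp [hee, Prod.ext_iff]
    · rw [h1 y s]
      have hiff : ((y + a = x) ∧ s = r) ↔ ((y = x - a) ∧ s = r) := by
        constructor <;> rintro ⟨hh, h2'⟩ <;> exact ⟨by omega, h2'⟩
      simp [hee, Prod.ext_iff, hiff]
  · intro x r
    apply ext_vec e hspan
    rintro ⟨y, b, s⟩
    rw [ContinuousLinearMap.star_eq_adjoint, ContinuousLinearMap.adjoint_inner_right]
    cases b
    · rw [h2 y s]
      have hiff : ((y + c = x) ∧ s = r) ↔ ((y = x - c) ∧ s = r) := by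
        constructor <;> rintro ⟨hh, h2'⟩ <;> exact ⟨by omega, h2'⟩
      simp [hee, Prod.ext_iff, hiff]
    · rw [h1 y s]; simp [hee, Prod.ext_iff]

lemma coin_mx (A B : Matrix (Fin d) (Fin d) ℂ) (hA : IsUnit A) (hB : Bᴴ = B)
    (h1 : Aᴴ * A + B * B = 1) :
    (A * Aᴴ + (-(A * B * A⁻¹)) * (-(A * B * A⁻¹))ᴴ = 1) ∧
    ((-(A * B * A⁻¹))ᴴ * (-(A * B * A⁻¹)) + A * Aᴴ = 1) ∧
    (Aᴴ * (-(A * B * A⁻¹)) + B * Aᴴ = 0) ∧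
    ((-(A * B * A⁻¹))ᴴ * A + A * B = 0) ∧
    (B * Aᴴ + Aᴴ * (-(A * B * A⁻¹))ᴴ = 0) ∧
    ((-(A * B * A⁻¹))ᴴ * (-(A * B * A⁻¹))ᴴ + A * Aᴴ = 1) ∧
    (A * B + (-(A * B * A⁻¹)) * A = 0) ∧
    (B * B + Aᴴ * A = 1) := by
  have hdet := (Matrix.isUnit_iff_isUnit_det A).mp hA
  have h2 : A * A⁻¹ = 1 := Matrix.mul_nonsing_inv A hdet
  have h3 : A⁻¹ * A = 1 := Matrix.nonsing_inv_mul A hdet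
  have h4 : Aᴴ * (A⁻¹)ᴴ = 1 := by
    rw [← Matrix.conjTranspose_mul, h3, Matrix.conjTranspose_one]
  have h5 : (A⁻¹)ᴴ * Aᴴ = 1 := by
    rw [← Matrix.conjTranspose_mul, h2, Matrix.conjTranspose_one]
  have hG : Aᴴ * A = 1 - B * B := by
    rw [← h1]; noncomm_ring
  have hBhatH : (-(A * B * A⁻¹))ᴴ = -((A⁻¹)ᴴ * B * Aᴴ) := by
    rw [Matrix.conjTranspose_neg, Matrix.conjTranspose_mul, Matrix.conjTranspose_mul, hB]
    noncomm_ring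
  have hcomm : (Aᴴ * A) * B = B * (Aᴴ * A) := by rw [hG]; noncomm_ring
  have h1c : B * B + Aᴴ * A = 1 := by rw [← h1]; abel
  have I4 : Aᴴ * (-(A * B * A⁻¹)) + B * Aᴴ = 0 := by
    have e1 : B * Aᴴ = (Aᴴ * A) * B * A⁻¹ := by
      calc B * Aᴴ = B * ((Aᴴ * A) * A⁻¹) := by
            rw [show (Aᴴ * A) * A⁻¹ = Aᴴ * (A * A⁻¹) by noncomm_ring, h2, mul_one]
        _ = (B * (Aᴴ * A)) * A⁻¹ := by noncomm_ring
        _ = ((Aᴴ * A) * B) * A⁻¹ := by rw [hcomm]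
        _ = (Aᴴ * A) * B * A⁻¹ := by noncomm_ring
    calc Aᴴ * (-(A * B * A⁻¹)) + B * Aᴴ
        = -((Aᴴ * A) * B * A⁻¹) + B * Aᴴ := by noncomm_ring
      _ = 0 := by rw [e1]; abel
  have I5 : (-(A * B * A⁻¹))ᴴ * A + A * B = 0 := by
    rw [hBhatH]
    have e1 : ((A⁻¹)ᴴ * B * Aᴴ) * A = A * B := by
      calc ((A⁻¹)ᴴ * B * Aᴴ) * A = (A⁻¹)ᴴ * (B * (Aᴴ * A)) := by noncomm_ring
        _ = (A⁻¹)ᴴ * ((Aᴴ * A) * B) := by rw [← hcomm]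
        _ = ((A⁻¹)ᴴ * Aᴴ) * (A * B) := by noncomm_ring
        _ = A * B := by rw [h5, one_mul]
    rw [show -((A⁻¹)ᴴ * B * Aᴴ) * A = -(((A⁻¹)ᴴ * B * Aᴴ) * A) by noncomm_ring, e1]
    abel
  have I7 : B * Aᴴ + Aᴴ * (-(A * B * A⁻¹))ᴴ = 0 := by
    rw [hBhatH]
    have e1 : Aᴴ * ((A⁻¹)ᴴ * B * Aᴴ) = B * Aᴴ := by
      calc Aᴴ * ((A⁻¹)ᴴ * B * Aᴴ) = (Aᴴ * (A⁻¹)ᴴ) * (B * Aᴴ) := by noncomm_ring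
        _ = B * Aᴴ := by rw [h4, one_mul]
    rw [show Aᴴ * -((A⁻¹)ᴴ * B * Aᴴ) = -(Aᴴ * ((A⁻¹)ᴴ * B * Aᴴ)) by noncomm_ring, e1]
    abel
  have I1' : A * B + (-(A * B * A⁻¹)) * A = 0 := by
    have e1 : (A * B * A⁻¹) * A = A * B := by
      calc (A * B * A⁻¹) * A = A * B * (A⁻¹ * A) := by noncomm_ring
        _ = A * B := by rw [h3, mul_one]
    rw [show (-(A * B * A⁻¹)) * A = -((A * B * A⁻¹) * A) by noncomm_ring, e1]
    abel
  have I8 : (-(A * B * A⁻¹))ᴴ * (-(A * B * A⁻¹))ᴴ + A * Aᴴ = 1 := by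
    rw [hBhatH]
    have cancelH : ∀ X Y : Matrix (Fin d) (Fin d) ℂ, Aᴴ * X = Aᴴ * Y → X = Y := by
      intro X Y hxy
      have := congrArg (fun Z => (A⁻¹)ᴴ * Z) hxy
      simpa [← mul_assoc, h5] using this
    apply cancelH
    calc Aᴴ * (-((A⁻¹)ᴴ * B * Aᴴ) * -((A⁻¹)ᴴ * B * Aᴴ) + A * Aᴴ)
        = (Aᴴ * (A⁻¹)ᴴ) * (B * ((Aᴴ * (A⁻¹)ᴴ) * (B * Aᴴ))) + (Aᴴ * A) * Aᴴ := by noncomm_ring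
      _ = B * (B * Aᴴ) + (Aᴴ * A) * Aᴴ := by rw [h4, one_mul, one_mul]
      _ = (B * B + Aᴴ * A) * Aᴴ := by noncomm_ring
      _ = Aᴴ := by rw [h1c, one_mul]
      _ = Aᴴ * 1 := by rw [mul_one]
  have I3 : (-(A * B * A⁻¹))ᴴ * (-(A * B * A⁻¹)) + A * Aᴴ = 1 := by
    rw [hBhatH]
    have cancel2 : ∀ X Y : Matrix (Fin d) (Fin d) ℂ, Aᴴ * X * A = Aᴴ * Y * A → X = Y := by
      intro X Y hxy
      have := congrArg (fun Z => (A⁻¹)ᴴ * Z * A⁻¹) hxy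
      simpa [show ∀ Z : Matrix (Fin d) (Fin d) ℂ, (A⁻¹)ᴴ * (Aᴴ * Z * A) * A⁻¹
          = ((A⁻¹)ᴴ * Aᴴ) * Z * (A * A⁻¹) from fun Z => by noncomm_ring, h5, h2] using this
    apply cancel2
    calc Aᴴ * (-((A⁻¹)ᴴ * B * Aᴴ) * -(A * B * A⁻¹) + A * Aᴴ) * A
        = (Aᴴ * (A⁻¹)ᴴ) * (B * ((Aᴴ * A) * (B * (A⁻¹ * A)))) + (Aᴴ * A) * (Aᴴ * A) := by
          noncomm_ring
      _ = B * ((Aᴴ * A) * B) + (Aᴴ * A) * (Aᴴ * A) := by rw [h4, h3, one_mul, mul_one]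
      _ = B * ((1 - B * B) * B) + (1 - B * B) * (1 - B * B) := by rw [hG]
      _ = 1 - B * B := by noncomm_ring
      _ = Aᴴ * A := by rw [hG]
      _ = Aᴴ * 1 * A := by rw [mul_one]
  have I2 : A * Aᴴ + (-(A * B * A⁻¹)) * (-(A * B * A⁻¹))ᴴ = 1 := by
    rw [hBhatH]
    have cancel3 : ∀ X Y : Matrix (Fin d) (Fin d) ℂ, A⁻¹ * X * A = A⁻¹ * Y * A → X = Y := by
      intro X Y hxy
      have := congrArg (fun Z => A * Z * A⁻¹) hxy
      simpa [show ∀ Z : Matrix (Fin d) (Fin d) ℂ, A * (A⁻¹ * Z * A) * A⁻¹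
          = (A * A⁻¹) * Z * (A * A⁻¹) from fun Z => by noncomm_ring, h2] using this
    apply cancel3
    calc A⁻¹ * (A * Aᴴ + -(A * B * A⁻¹) * -((A⁻¹)ᴴ * B * Aᴴ)) * A
        = (A⁻¹ * A) * (Aᴴ * A) + (A⁻¹ * A) * (B * (A⁻¹ * ((A⁻¹)ᴴ * (B * (Aᴴ * A))))) := by
          noncomm_ring
      _ = Aᴴ * A + B * (A⁻¹ * ((A⁻¹)ᴴ * (B * (Aᴴ * A)))) := by rw [h3, one_mul, one_mul]
      _ = Aᴴ * A + B * (A⁻¹ * ((A⁻¹)ᴴ * ((Aᴴ * A) * B))) := by rw [hcomm]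
      _ = Aᴴ * A + B * (A⁻¹ * (((A⁻¹)ᴴ * Aᴴ) * (A * B))) := by noncomm_ring
      _ = Aᴴ * A + B * (A⁻¹ * (A * B)) := by rw [h5, one_mul]
      _ = Aᴴ * A + B * ((A⁻¹ * A) * B) := by noncomm_ring
      _ = Aᴴ * A + B * B := by rw [h3, one_mul]
      _ = 1 := h1
      _ = A⁻¹ * 1 * A := by rw [mul_one, h3]
  exact ⟨I2, I3, I4, I5, I7, I8, I1', h1c⟩


lemma cyclic_core
    (e : ℤ × Bool × Fin d → H) (he : Orthonormal ℂ e)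
    (hspan : (Submodule.span ℂ (Set.range e)).topologicalClosure = ⊤)
    (Sup Sdn C₁ C₂ : H →L[ℂ] H)
    (A₁ B₁ Bhat₁ A₂ B₂ Bhat₂ : ℤ → Matrix (Fin d) (Fin d) ℂ)
    (hA₁ : ∀ x, IsUnit (A₁ x)) (hA₂ : ∀ x, IsUnit (A₂ x))
    (hB₁ : ∀ x, (B₁ x).IsHermitian) (hB₂ : ∀ x, (B₂ x).IsHermitian)
    (hBhat₁ : ∀ x, Bhat₁ x = -(A₁ x * B₁ x * (A₁ x)⁻¹))
    (hBhat₂ : ∀ x, Bhat₂ x = -(A₂ x * B₂ x * (A₂ x)⁻¹))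
    (hnorm₁ : ∀ x, (A₁ x)ᴴ * A₁ x + B₁ x * B₁ x = 1)
    (hnorm₂ : ∀ x, (A₂ x)ᴴ * A₂ x + B₂ x * B₂ x = 1)
    (hSup_up : ∀ x r, Sup (e (x, true, r)) = e (x + 1, true, r))
    (hSup_dn : ∀ x r, Sup (e (x, false, r)) = e (x, false, r))
    (hSdn_up : ∀ x r, Sdn (e (x, true, r)) = e (x, true, r))
    (hSdn_dn : ∀ x r, Sdn (e (x, false, r)) = e (x - 1, false, r))
    (hC₁u : ∀ x r, C₁ (e (x, true, r)) =
      (∑ s, A₁ x s r • e (x, true, s)) + ∑ s, B₁ x s r • e (x, false, s))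
    (hC₁d : ∀ x r, C₁ (e (x, false, r)) =
      (∑ s, Bhat₁ x s r • e (x, true, s)) +
        ∑ s, (starRingEnd ℂ) (A₁ x r s) • e (x, false, s))
    (hC₂u : ∀ x r, C₂ (e (x, true, r)) =
      (∑ s, A₂ x s r • e (x, true, s)) + ∑ s, B₂ x s r • e (x, false, s))
    (hC₂d : ∀ x r, C₂ (e (x, false, r)) =
      (∑ s, Bhat₂ x s r • e (x, true, s)) +
        ∑ s, (starRingEnd ℂ) (A₂ x r s) • e (x, false, s))
    (x : ℤ) (K : Submodule ℂ H)
    (hKu : ∀ r, e (x, true, r) ∈ K)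
    (hKd : (∀ r, e (x, false, r) ∈ K) ∨ (∀ r, e (x - 1, false, r) ∈ K)) :
    cyclicSubspace (Sdn ∘L C₂ ∘L Sup ∘L C₁) K = ⊤ := by
  set W : H →L[ℂ] H := Sdn ∘L C₂ ∘L Sup ∘L C₁ with hWdef
  -- coin actions in conjTranspose form
  have hC₁d' : ∀ y r, C₁ (e (y, false, r)) =
      (∑ s, Bhat₁ y s r • e (y, true, s)) + ∑ s, (A₁ y)ᴴ s r • e (y, false, s) := by
    intro y r
    rw [hC₁d y r]
    congr 1
  have hC₂d' : ∀ y r, C₂ (e (y, false, r)) =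
      (∑ s, Bhat₂ y s r • e (y, true, s)) + ∑ s, (A₂ y)ᴴ s r • e (y, false, s) := by
    intro y r
    rw [hC₂d y r]
    congr 1
  -- svec level actions
  have aC₁u : ∀ y c, C₁ (svec e true y c)
      = svec e true y (A₁ y *ᵥ c) + svec e false y (B₁ y *ᵥ c) :=
    fun y c => coin_svec e C₁ true A₁ B₁ hC₁u y c
  have aC₁d : ∀ y c, C₁ (svec e false y c)
      = svec e true y (Bhat₁ y *ᵥ c) + svec e false y ((A₁ y)ᴴ *ᵥ c) :=
    fun y c => coin_svec e C₁ false Bhat₁ (fun z => (A₁ z)ᴴ) hC₁d' y c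
  have aC₂u : ∀ y c, C₂ (svec e true y c)
      = svec e true y (A₂ y *ᵥ c) + svec e false y (B₂ y *ᵥ c) :=
    fun y c => coin_svec e C₂ true A₂ B₂ hC₂u y c
  have aC₂d : ∀ y c, C₂ (svec e false y c)
      = svec e true y (Bhat₂ y *ᵥ c) + svec e false y ((A₂ y)ᴴ *ᵥ c) :=
    fun y c => coin_svec e C₂ false Bhat₂ (fun z => (A₂ z)ᴴ) hC₂d' y c
  have aSupU : ∀ y c, Sup (svec e true y c) = svec e true (y + 1) c :=
    fun y c => shift_svec e Sup true (fun z => z + 1) hSup_up y c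
  have aSupD : ∀ y c, Sup (svec e false y c) = svec e false y c :=
    fun y c => shift_svec e Sup false (fun z => z) hSup_dn y c
  have aSdnU : ∀ y c, Sdn (svec e true y c) = svec e true y c :=
    fun y c => shift_svec e Sdn true (fun z => z) hSdn_up y c
  have aSdnD : ∀ y c, Sdn (svec e false y c) = svec e false (y - 1) c :=
    fun y c => shift_svec e Sdn false (fun z => z - 1) hSdn_dn y c
  -- adjoints of the coins on basis vectors
  obtain ⟨sC₁u, sC₁d⟩ := star_coin e he hspan C₁ A₁ B₁ Bhat₁ (fun z => (A₁ z)ᴴ) hC₁u hC₁d'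
  obtain ⟨sC₂u, sC₂d⟩ := star_coin e he hspan C₂ A₂ B₂ Bhat₂ (fun z => (A₂ z)ᴴ) hC₂u hC₂d'
  have sC₁d' : ∀ y r, (star C₁) (e (y, false, r)) =
      (∑ s, B₁ y s r • e (y, true, s)) + ∑ s, A₁ y s r • e (y, false, s) := by
    intro y r
    have := sC₁d y r
    simpa only [Matrix.conjTranspose_conjTranspose, (hB₁ y).eq] using this
  have sC₂d' : ∀ y r, (star C₂) (e (y, false, r)) =
      (∑ s, B₂ y s r • e (y, true, s)) + ∑ s, A₂ y s r • e (y, false, s) := by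
    intro y r
    have := sC₂d y r
    simpa only [Matrix.conjTranspose_conjTranspose, (hB₂ y).eq] using this
  have saC₁u : ∀ y c, (star C₁) (svec e true y c)
      = svec e true y ((A₁ y)ᴴ *ᵥ c) + svec e false y ((Bhat₁ y)ᴴ *ᵥ c) :=
    fun y c => coin_svec e (star C₁) true (fun z => (A₁ z)ᴴ) (fun z => (Bhat₁ z)ᴴ) sC₁u y c
  have saC₁d : ∀ y c, (star C₁) (svec e false y c)
      = svec e true y (B₁ y *ᵥ c) + svec e false y (A₁ y *ᵥ c) :=
    fun y c => coin_svec e (star C₁) false B₁ A₁ sC₁d' y c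
  have saC₂u : ∀ y c, (star C₂) (svec e true y c)
      = svec e true y ((A₂ y)ᴴ *ᵥ c) + svec e false y ((Bhat₂ y)ᴴ *ᵥ c) :=
    fun y c => coin_svec e (star C₂) true (fun z => (A₂ z)ᴴ) (fun z => (Bhat₂ z)ᴴ) sC₂u y c
  have saC₂d : ∀ y c, (star C₂) (svec e false y c)
      = svec e true y (B₂ y *ᵥ c) + svec e false y (A₂ y *ᵥ c) :=
    fun y c => coin_svec e (star C₂) false B₂ A₂ sC₂d' y c
  -- adjoints of the shifts
  have hSup_dn0 : ∀ y r, Sup (e (y, false, r)) = e (y + 0, false, r) := by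
    intro y r; rw [add_zero]; exact hSup_dn y r
  have hSdn_up0 : ∀ y r, Sdn (e (y, true, r)) = e (y + 0, true, r) := by
    intro y r; rw [add_zero]; exact hSdn_up y r
  have hSdn_dn' : ∀ y r, Sdn (e (y, false, r)) = e (y + (-1), false, r) := by
    intro y r; rw [show y + (-1 : ℤ) = y - 1 by ring]; exact hSdn_dn y r
  obtain ⟨sSup_u, sSup_d0⟩ := star_shift e he hspan Sup 1 0 hSup_up hSup_dn0
  obtain ⟨sSdn_u0, sSdn_d0⟩ := star_shift e he hspan Sdn 0 (-1) hSdn_up0 hSdn_dn'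
  have sSup_d : ∀ y r, (star Sup) (e (y, false, r)) = e (y, false, r) := by
    intro y r; simpa using sSup_d0 y r
  have sSdn_u : ∀ y r, (star Sdn) (e (y, true, r)) = e (y, true, r) := by
    intro y r; simpa using sSdn_u0 y r
  have sSdn_d : ∀ y r, (star Sdn) (e (y, false, r)) = e (y + 1, false, r) := by
    intro y r
    have := sSdn_d0 y r
    rwa [show y - (-1 : ℤ) = y + 1 by ring] at this
  have saSupU : ∀ y c, (star Sup) (svec e true y c) = svec e true (y - 1) c :=
    fun y c => shift_svec e (star Sup) true (fun z => z - 1) sSup_u y c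
  have saSupD : ∀ y c, (star Sup) (svec e false y c) = svec e false y c :=
    fun y c => shift_svec e (star Sup) false (fun z => z) sSup_d y c
  have saSdnU : ∀ y c, (star Sdn) (svec e true y c) = svec e true y c :=
    fun y c => shift_svec e (star Sdn) true (fun z => z) sSdn_u y c
  have saSdnD : ∀ y c, (star Sdn) (svec e false y c) = svec e false (y + 1) c :=
    fun y c => shift_svec e (star Sdn) false (fun z => z + 1) sSdn_d y c
  -- matrix identities
  have mx₁ := fun y => coin_mx (A₁ y) (B₁ y) (hA₁ y) (hB₁ y).eq (hnorm₁ y)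
  have mx₂ := fun y => coin_mx (A₂ y) (B₂ y) (hA₂ y) (hB₂ y).eq (hnorm₂ y)
  have i2₁ : ∀ y, A₁ y * (A₁ y)ᴴ + Bhat₁ y * (Bhat₁ y)ᴴ = 1 := fun y => by
    rw [hBhat₁ y]; exact (mx₁ y).1
  have i3₁ : ∀ y, (Bhat₁ y)ᴴ * Bhat₁ y + A₁ y * (A₁ y)ᴴ = 1 := fun y => by
    rw [hBhat₁ y]; exact (mx₁ y).2.1
  have i4₁ : ∀ y, (A₁ y)ᴴ * Bhat₁ y + B₁ y * (A₁ y)ᴴ = 0 := fun y => by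
    rw [hBhat₁ y]; exact (mx₁ y).2.2.1
  have i5₁ : ∀ y, (Bhat₁ y)ᴴ * A₁ y + A₁ y * B₁ y = 0 := fun y => by
    rw [hBhat₁ y]; exact (mx₁ y).2.2.2.1
  have i7₁ : ∀ y, B₁ y * (A₁ y)ᴴ + (A₁ y)ᴴ * (Bhat₁ y)ᴴ = 0 := fun y => by
    rw [hBhat₁ y]; exact (mx₁ y).2.2.2.2.1
  have i8₁ : ∀ y, (Bhat₁ y)ᴴ * (Bhat₁ y)ᴴ + A₁ y * (A₁ y)ᴴ = 1 := fun y => by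
    rw [hBhat₁ y]; exact (mx₁ y).2.2.2.2.2.1
  have i1'₁ : ∀ y, A₁ y * B₁ y + Bhat₁ y * A₁ y = 0 := fun y => by
    rw [hBhat₁ y]; exact (mx₁ y).2.2.2.2.2.2.1
  have i1c₁ : ∀ y, B₁ y * B₁ y + (A₁ y)ᴴ * A₁ y = 1 := fun y => (mx₁ y).2.2.2.2.2.2.2
  have i2₂ : ∀ y, A₂ y * (A₂ y)ᴴ + Bhat₂ y * (Bhat₂ y)ᴴ = 1 := fun y => by
    rw [hBhat₂ y]; exact (mx₂ y).1
  have i3₂ : ∀ y, (Bhat₂ y)ᴴ * Bhat₂ y + A₂ y * (A₂ y)ᴴ = 1 := fun y => by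
    rw [hBhat₂ y]; exact (mx₂ y).2.1
  have i4₂ : ∀ y, (A₂ y)ᴴ * Bhat₂ y + B₂ y * (A₂ y)ᴴ = 0 := fun y => by
    rw [hBhat₂ y]; exact (mx₂ y).2.2.1
  have i5₂ : ∀ y, (Bhat₂ y)ᴴ * A₂ y + A₂ y * B₂ y = 0 := fun y => by
    rw [hBhat₂ y]; exact (mx₂ y).2.2.2.1
  have i7₂ : ∀ y, B₂ y * (A₂ y)ᴴ + (A₂ y)ᴴ * (Bhat₂ y)ᴴ = 0 := fun y => by
    rw [hBhat₂ y]; exact (mx₂ y).2.2.2.2.1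
  have i8₂ : ∀ y, (Bhat₂ y)ᴴ * (Bhat₂ y)ᴴ + A₂ y * (A₂ y)ᴴ = 1 := fun y => by
    rw [hBhat₂ y]; exact (mx₂ y).2.2.2.2.2.1
  have i1'₂ : ∀ y, A₂ y * B₂ y + Bhat₂ y * A₂ y = 0 := fun y => by
    rw [hBhat₂ y]; exact (mx₂ y).2.2.2.2.2.2.1
  have i1c₂ : ∀ y, B₂ y * B₂ y + (A₂ y)ᴴ * A₂ y = 1 := fun y => (mx₂ y).2.2.2.2.2.2.2
  -- applications of W and star W
  have hWapp : ∀ v : H, W v = Sdn (C₂ (Sup (C₁ v))) := fun v => rfl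
  have hW'app : ∀ v : H, (star W) v = (star C₁) ((star Sup) ((star C₂) ((star Sdn) v))) := by
    intro v
    have hsw : star W = (((star C₁) ∘L (star Sup)) ∘L (star C₂)) ∘L (star Sdn) := by
      simp only [hWdef, ContinuousLinearMap.star_eq_adjoint, ContinuousLinearMap.adjoint_comp]
    rw [hsw]; rfl
  -- the four propagation identities
  have con1 : ∀ y u, W (svec e true y ((A₁ y)ᴴ *ᵥ u) + svec e false y ((Bhat₁ y)ᴴ *ᵥ u))
      = svec e true (y + 1) (A₂ (y + 1) *ᵥ u) + svec e false y (B₂ (y + 1) *ᵥ u) := by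
    intro y u
    rw [hWapp, map_add, aC₁u, aC₁d, add_add_add_comm, svec_add, svec_add,
      Matrix.mulVec_mulVec, Matrix.mulVec_mulVec, Matrix.mulVec_mulVec, Matrix.mulVec_mulVec,
      ← Matrix.add_mulVec, ← Matrix.add_mulVec, i2₁ y, i7₁ y,
      Matrix.one_mulVec, Matrix.zero_mulVec, svec_zero, add_zero,
      aSupU, aC₂u, map_add, aSdnU, aSdnD, add_sub_cancel_right]
  have con2 : ∀ y w, W (svec e true y (B₁ y *ᵥ w) + svec e false y (A₁ y *ᵥ w))
      = svec e true y (Bhat₂ y *ᵥ w) + svec e false (y - 1) ((A₂ y)ᴴ *ᵥ w) := by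
    intro y w
    rw [hWapp, map_add, aC₁u, aC₁d, add_add_add_comm, svec_add, svec_add,
      Matrix.mulVec_mulVec, Matrix.mulVec_mulVec, Matrix.mulVec_mulVec, Matrix.mulVec_mulVec,
      ← Matrix.add_mulVec, ← Matrix.add_mulVec, i1'₁ y, i1c₁ y,
      Matrix.one_mulVec, Matrix.zero_mulVec, svec_zero, zero_add,
      aSupD, aC₂d, map_add, aSdnU, aSdnD]
  have con3 : ∀ y u, (star W) (svec e false (y - 1) (B₂ y *ᵥ u) + svec e true y (A₂ y *ᵥ u))
      = svec e true (y - 1) ((A₁ (y - 1))ᴴ *ᵥ u) + svec e false (y - 1) ((Bhat₁ (y - 1))ᴴ *ᵥ u) := by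
    intro y u
    rw [hW'app, map_add, saSdnD, saSdnU, sub_add_cancel, map_add, saC₂d, saC₂u,
      add_add_add_comm, svec_add, svec_add,
      Matrix.mulVec_mulVec, Matrix.mulVec_mulVec, Matrix.mulVec_mulVec, Matrix.mulVec_mulVec,
      ← Matrix.add_mulVec, ← Matrix.add_mulVec, i1c₂ y,
      show A₂ y * B₂ y + (Bhat₂ y)ᴴ * A₂ y = 0 by rw [add_comm]; exact i5₂ y,
      Matrix.one_mulVec, Matrix.zero_mulVec, svec_zero, add_zero,
      saSupU, saC₁u]
  have con5 : ∀ y w, (star W) (svec e true y (Bhat₂ y *ᵥ w) + svec e false (y - 1) ((A₂ y)ᴴ *ᵥ w))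
      = svec e true y (B₁ y *ᵥ w) + svec e false y (A₁ y *ᵥ w) := by
    intro y w
    rw [hW'app, map_add, saSdnU, saSdnD, sub_add_cancel, map_add, saC₂u, saC₂d,
      add_add_add_comm, svec_add, svec_add,
      Matrix.mulVec_mulVec, Matrix.mulVec_mulVec, Matrix.mulVec_mulVec, Matrix.mulVec_mulVec,
      ← Matrix.add_mulVec, ← Matrix.add_mulVec, i4₂ y,
      show (Bhat₂ y)ᴴ * Bhat₂ y + A₂ y * (A₂ y)ᴴ = 1 from i3₂ y,
      Matrix.zero_mulVec, Matrix.one_mulVec, svec_zero, zero_add,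
      saSupD, saC₁d]
  -- decomposition of a cell state into the two W-families
  have decompW : ∀ y (c₁ c₂ : Fin d → ℂ),
      (svec e true y ((A₁ y)ᴴ *ᵥ (A₁ y *ᵥ c₁ + Bhat₁ y *ᵥ c₂))
        + svec e false y ((Bhat₁ y)ᴴ *ᵥ (A₁ y *ᵥ c₁ + Bhat₁ y *ᵥ c₂)))
      + (svec e true y (B₁ y *ᵥ (B₁ y *ᵥ c₁ + (A₁ y)ᴴ *ᵥ c₂))
        + svec e false y (A₁ y *ᵥ (B₁ y *ᵥ c₁ + (A₁ y)ᴴ *ᵥ c₂)))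
      = svec e true y c₁ + svec e false y c₂ := by
    intro y c₁ c₂
    rw [add_add_add_comm, svec_add, svec_add]
    congr 1
    · congr 1
      rw [Matrix.mulVec_add, Matrix.mulVec_add, Matrix.mulVec_mulVec, Matrix.mulVec_mulVec,
        Matrix.mulVec_mulVec, Matrix.mulVec_mulVec, add_add_add_comm, ← Matrix.add_mulVec,
        ← Matrix.add_mulVec, hnorm₁ y, i4₁ y, Matrix.one_mulVec, Matrix.zero_mulVec, add_zero]
    · congr 1
      rw [Matrix.mulVec_add, Matrix.mulVec_add, Matrix.mulVec_mulVec, Matrix.mulVec_mulVec,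
        Matrix.mulVec_mulVec, Matrix.mulVec_mulVec, add_add_add_comm, ← Matrix.add_mulVec,
        ← Matrix.add_mulVec, i5₁ y, i3₁ y, Matrix.one_mulVec, Matrix.zero_mulVec, zero_add]
  have decompW' : ∀ z (c₁ c₂ : Fin d → ℂ),
      (svec e false (z - 1) (B₂ z *ᵥ ((A₂ z)ᴴ *ᵥ c₁ + B₂ z *ᵥ c₂))
        + svec e true z (A₂ z *ᵥ ((A₂ z)ᴴ *ᵥ c₁ + B₂ z *ᵥ c₂)))
      + (svec e true z (Bhat₂ z *ᵥ ((Bhat₂ z)ᴴ *ᵥ c₁ + A₂ z *ᵥ c₂))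
        + svec e false (z - 1) ((A₂ z)ᴴ *ᵥ ((Bhat₂ z)ᴴ *ᵥ c₁ + A₂ z *ᵥ c₂)))
      = svec e true z c₁ + svec e false (z - 1) c₂ := by
    intro z c₁ c₂
    rw [add_comm (svec e false (z - 1) (B₂ z *ᵥ ((A₂ z)ᴴ *ᵥ c₁ + B₂ z *ᵥ c₂)))
        (svec e true z (A₂ z *ᵥ ((A₂ z)ᴴ *ᵥ c₁ + B₂ z *ᵥ c₂))),
      add_add_add_comm, svec_add, svec_add]
    congr 1
    · congr 1
      rw [Matrix.mulVec_add, Matrix.mulVec_add, Matrix.mulVec_mulVec, Matrix.mulVec_mulVec,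
        Matrix.mulVec_mulVec, Matrix.mulVec_mulVec, add_add_add_comm, ← Matrix.add_mulVec,
        ← Matrix.add_mulVec, i2₂ z, i1'₂ z, Matrix.one_mulVec, Matrix.zero_mulVec, add_zero]
    · congr 1
      rw [Matrix.mulVec_add, Matrix.mulVec_add, Matrix.mulVec_mulVec, Matrix.mulVec_mulVec,
        Matrix.mulVec_mulVec, Matrix.mulVec_mulVec, add_add_add_comm, ← Matrix.add_mulVec,
        ← Matrix.add_mulVec, i7₂ z, i1c₂ z, Matrix.one_mulVec, Matrix.zero_mulVec, zero_add]
  -- unitarity on cell states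
  have uWW : ∀ y (c₁ c₂ : Fin d → ℂ),
      (star W) (W (svec e true y c₁ + svec e false y c₂)) =
        svec e true y c₁ + svec e false y c₂ := by
    intro y c₁ c₂
    conv_lhs => rw [← decompW y c₁ c₂]
    rw [map_add, con1, con2, map_add]
    have h1 : (star W) (svec e true (y + 1) (A₂ (y + 1) *ᵥ (A₁ y *ᵥ c₁ + Bhat₁ y *ᵥ c₂))
        + svec e false y (B₂ (y + 1) *ᵥ (A₁ y *ᵥ c₁ + Bhat₁ y *ᵥ c₂)))
        = svec e true y ((A₁ y)ᴴ *ᵥ (A₁ y *ᵥ c₁ + Bhat₁ y *ᵥ c₂))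
          + svec e false y ((Bhat₁ y)ᴴ *ᵥ (A₁ y *ᵥ c₁ + Bhat₁ y *ᵥ c₂)) := by
      have h := con3 (y + 1) (A₁ y *ᵥ c₁ + Bhat₁ y *ᵥ c₂)
      rw [add_sub_cancel_right] at h
      rw [add_comm (svec e true (y + 1) (A₂ (y + 1) *ᵥ (A₁ y *ᵥ c₁ + Bhat₁ y *ᵥ c₂)))
        (svec e false y (B₂ (y + 1) *ᵥ (A₁ y *ᵥ c₁ + Bhat₁ y *ᵥ c₂)))]
      exact h
    rw [h1, con5 y (B₁ y *ᵥ c₁ + (A₁ y)ᴴ *ᵥ c₂)]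
    exact decompW y c₁ c₂
  have uW'W : ∀ z (c₁ c₂ : Fin d → ℂ),
      W ((star W) (svec e true z c₁ + svec e false (z - 1) c₂)) =
        svec e true z c₁ + svec e false (z - 1) c₂ := by
    intro z c₁ c₂
    conv_lhs => rw [← decompW' z c₁ c₂]
    rw [map_add, con3 z, con5 z, map_add, con1 (z - 1), con2 z, sub_add_cancel,
      add_comm (svec e true z (A₂ z *ᵥ ((A₂ z)ᴴ *ᵥ c₁ + B₂ z *ᵥ c₂)))
        (svec e false (z - 1) (B₂ z *ᵥ ((A₂ z)ᴴ *ᵥ c₁ + B₂ z *ᵥ c₂)))]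
    exact decompW' z c₁ c₂
  -- W is unitary
  have hdense : Dense ((Submodule.span ℂ (Set.range e) : Submodule ℂ H) : Set H) :=
    Submodule.dense_iff_topologicalClosure_eq_top.mpr hspan
  have hWW : star W * W = 1 := by
    apply ContinuousLinearMap.ext_on hdense
    rintro v ⟨⟨z, b, r⟩, rfl⟩
    show (star W) (W (e (z, b, r))) = e (z, b, r)
    cases b
    · have := uWW z 0 (Pi.single r 1)
      simpa [svec_zero, svec_single] using this
    · have := uWW z (Pi.single r 1) 0
      simpa [svec_zero, svec_single] using this
  have hW'W : W * star W = 1 := by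
    apply ContinuousLinearMap.ext_on hdense
    rintro v ⟨⟨z, b, r⟩, rfl⟩
    show W ((star W) (e (z, b, r))) = e (z, b, r)
    cases b
    · have := uW'W (z + 1) 0 (Pi.single r 1)
      simpa [svec_zero, svec_single, add_sub_cancel_right] using this
    · have := uW'W z (Pi.single r 1) 0
      simpa [svec_zero, svec_single] using this
  -- the cyclic subspace and its invariance
  set Ssup : Submodule ℂ H :=
    ⨆ n : ℕ, Submodule.map ((W ^ n : H →L[ℂ] H) : H →ₗ[ℂ] H) K ⊔ Submodule.map (((star W) ^ n : H →L[ℂ] H) : H →ₗ[ℂ] H) K with hSsup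
  have hVS : cyclicSubspace W K = Ssup.topologicalClosure := rfl
  have hKV : K ≤ cyclicSubspace W K := by
    intro v hv
    rw [hVS]
    apply Submodule.le_topologicalClosure
    exact Submodule.mem_iSup_of_mem 0 (Submodule.mem_sup_left ⟨v, hv, by simp⟩)
  have hstepW : ∀ v ∈ Ssup, W v ∈ Ssup := by
    intro v hv
    refine Submodule.iSup_induction _ (motive := fun w => W w ∈ Ssup) hv ?_ ?_ ?_
    · rintro n w hw
      rcases Submodule.mem_sup.mp hw with ⟨a, ha, b, hb, rfl⟩
      rcases ha with ⟨k, hk, rfl⟩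
      rcases hb with ⟨k', hk', rfl⟩
      rw [map_add]
      refine Submodule.add_mem _ ?_ ?_
      · have hWa : W ((W ^ n) k) = (W ^ (n + 1)) k := by rw [pow_succ']; rfl
        rw [ContinuousLinearMap.coe_coe, hWa]
        exact Submodule.mem_iSup_of_mem (n + 1) (Submodule.mem_sup_left ⟨k, hk, rfl⟩)
      · cases n with
        | zero =>
          refine Submodule.mem_iSup_of_mem 1 (Submodule.mem_sup_left ⟨k', hk', ?_⟩)
          simp
        | succ m =>
          have hWb : W (((star W) ^ (m + 1)) k') = ((star W) ^ m) k' := by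
            have h : W * (star W) ^ (m + 1) = (star W) ^ m := by
              rw [pow_succ', ← mul_assoc, hW'W, one_mul]
            calc W (((star W) ^ (m + 1)) k') = (W * (star W) ^ (m + 1)) k' := rfl
              _ = ((star W) ^ m) k' := by rw [h]
          rw [ContinuousLinearMap.coe_coe, hWb]
          exact Submodule.mem_iSup_of_mem m (Submodule.mem_sup_right ⟨k', hk', rfl⟩)
    · show W 0 ∈ Ssup
      rw [map_zero]; exact Submodule.zero_mem _
    · intro a b ha hb; rw [map_add]; exact Submodule.add_mem _ ha hb
  have hstepW' : ∀ v ∈ Ssup, (star W) v ∈ Ssup := by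
    intro v hv
    refine Submodule.iSup_induction _ (motive := fun w => (star W) w ∈ Ssup) hv ?_ ?_ ?_
    · rintro n w hw
      rcases Submodule.mem_sup.mp hw with ⟨a, ha, b, hb, rfl⟩
      rcases ha with ⟨k, hk, rfl⟩
      rcases hb with ⟨k', hk', rfl⟩
      rw [map_add]
      refine Submodule.add_mem _ ?_ ?_
      · cases n with
        | zero =>
          refine Submodule.mem_iSup_of_mem 1 (Submodule.mem_sup_right ⟨k, hk, ?_⟩)
          simp
        | succ m =>
          have hWb : (star W) ((W ^ (m + 1)) k) = (W ^ m) k := by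
            have h : star W * W ^ (m + 1) = W ^ m := by
              rw [pow_succ', ← mul_assoc, hWW, one_mul]
            calc (star W) ((W ^ (m + 1)) k) = (star W * W ^ (m + 1)) k := rfl
              _ = (W ^ m) k := by rw [h]
          rw [ContinuousLinearMap.coe_coe, hWb]
          exact Submodule.mem_iSup_of_mem m (Submodule.mem_sup_left ⟨k, hk, rfl⟩)
      · have hWb : (star W) (((star W) ^ n) k') = ((star W) ^ (n + 1)) k' := by
          rw [pow_succ']; rfl
        rw [ContinuousLinearMap.coe_coe, hWb]
        exact Submodule.mem_iSup_of_mem (n + 1) (Submodule.mem_sup_right ⟨k', hk', rfl⟩)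
    · show (star W) 0 ∈ Ssup
      rw [map_zero]; exact Submodule.zero_mem _
    · intro a b ha hb; rw [map_add]; exact Submodule.add_mem _ ha hb
  have hWV : ∀ v ∈ cyclicSubspace W K, W v ∈ cyclicSubspace W K := by
    intro v hv
    rw [hVS] at hv ⊢
    have h1 : v ∈ closure (Ssup : Set H) := hv
    have h4 : W v ∈ closure (W '' (Ssup : Set H)) :=
      image_closure_subset_closure_image W.continuous ⟨v, h1, rfl⟩
    have h5 : closure (W '' (Ssup : Set H)) ⊆ closure (Ssup : Set H) :=
      closure_mono (by rintro _ ⟨w, hw, rfl⟩; exact hstepW w hw)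
    exact h5 h4
  have hW'V : ∀ v ∈ cyclicSubspace W K, (star W) v ∈ cyclicSubspace W K := by
    intro v hv
    rw [hVS] at hv ⊢
    have h1 : v ∈ closure (Ssup : Set H) := hv
    have h4 : (star W) v ∈ closure (⇑(star W) '' (Ssup : Set H)) :=
      image_closure_subset_closure_image (star W).continuous ⟨v, h1, rfl⟩
    have h5 : closure (⇑(star W) '' (Ssup : Set H)) ⊆ closure (Ssup : Set H) :=
      closure_mono (by rintro _ ⟨w, hw, rfl⟩; exact hstepW' w hw)
    exact h5 h4
  -- determinant units
  have hA1det : ∀ z, IsUnit (A₁ z).det := fun z => (Matrix.isUnit_iff_isUnit_det _).mp (hA₁ z)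
  have hA2det : ∀ z, IsUnit (A₂ z).det := fun z => (Matrix.isUnit_iff_isUnit_det _).mp (hA₂ z)
  have hA1Hdet : ∀ z, IsUnit ((A₁ z)ᴴ).det := fun z => by
    rw [Matrix.det_conjTranspose]; exact (hA1det z).star
  have hA2Hdet : ∀ z, IsUnit ((A₂ z)ᴴ).det := fun z => by
    rw [Matrix.det_conjTranspose]; exact (hA2det z).star
  -- the four propagation steps
  have S1 : ∀ y, (∀ r, e (y, true, r) ∈ cyclicSubspace W K) →
      (∀ r, e (y, false, r) ∈ cyclicSubspace W K) →
      ∀ t, e (y + 1, true, t) ∈ cyclicSubspace W K := by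
    intro y hu hdn t
    set u : Fin d → ℂ := (A₂ (y + 1))⁻¹ *ᵥ Pi.single t 1 with hu_def
    have hv : svec e true y ((A₁ y)ᴴ *ᵥ u) + svec e false y ((Bhat₁ y)ᴴ *ᵥ u)
        ∈ cyclicSubspace W K :=
      Submodule.add_mem _ (svec_mem e hu _) (svec_mem e hdn _)
    have hWv := hWV _ hv
    rw [con1 y u] at hWv
    have hA2u : A₂ (y + 1) *ᵥ u = Pi.single t 1 := by
      rw [hu_def, Matrix.mulVec_mulVec, Matrix.mul_nonsing_inv _ (hA2det (y + 1)),
        Matrix.one_mulVec]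
    rw [hA2u, svec_single] at hWv
    have hsub := Submodule.sub_mem _ hWv (svec_mem e hdn (B₂ (y + 1) *ᵥ u))
    simpa using hsub
  have S2 : ∀ y, (∀ r, e (y, true, r) ∈ cyclicSubspace W K) →
      (∀ r, e (y, false, r) ∈ cyclicSubspace W K) →
      ∀ t, e (y - 1, false, t) ∈ cyclicSubspace W K := by
    intro y hu hdn t
    set w : Fin d → ℂ := ((A₂ y)ᴴ)⁻¹ *ᵥ Pi.single t 1 with hw_def
    have hv : svec e true y (B₁ y *ᵥ w) + svec e false y (A₁ y *ᵥ w)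
        ∈ cyclicSubspace W K :=
      Submodule.add_mem _ (svec_mem e hu _) (svec_mem e hdn _)
    have hWv := hWV _ hv
    rw [con2 y w] at hWv
    have hA2w : (A₂ y)ᴴ *ᵥ w = Pi.single t 1 := by
      rw [hw_def, Matrix.mulVec_mulVec, Matrix.mul_nonsing_inv _ (hA2Hdet y),
        Matrix.one_mulVec]
    rw [hA2w, svec_single] at hWv
    have hsub := Submodule.sub_mem _ hWv (svec_mem e hu (Bhat₂ y *ᵥ w))
    simpa using hsub
  have S3 : ∀ y, (∀ r, e (y - 1, false, r) ∈ cyclicSubspace W K) →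
      (∀ r, e (y, true, r) ∈ cyclicSubspace W K) →
      ∀ t, e (y, false, t) ∈ cyclicSubspace W K := by
    intro y hdn hu t
    set w : Fin d → ℂ := (A₁ y)⁻¹ *ᵥ Pi.single t 1 with hw_def
    have hv : svec e true y (Bhat₂ y *ᵥ w) + svec e false (y - 1) ((A₂ y)ᴴ *ᵥ w)
        ∈ cyclicSubspace W K :=
      Submodule.add_mem _ (svec_mem e hu _) (svec_mem e hdn _)
    have hWv := hW'V _ hv
    rw [con5 y w] at hWv
    have hA1w : A₁ y *ᵥ w = Pi.single t 1 := by
      rw [hw_def, Matrix.mulVec_mulVec, Matrix.mul_nonsing_inv _ (hA1det y), Matrix.one_mulVec]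
    rw [hA1w, svec_single] at hWv
    have hsub := Submodule.sub_mem _ hWv (svec_mem e hu (B₁ y *ᵥ w))
    simpa using hsub
  have S4 : ∀ y, (∀ r, e (y - 1, false, r) ∈ cyclicSubspace W K) →
      (∀ r, e (y, true, r) ∈ cyclicSubspace W K) →
      ∀ t, e (y - 1, true, t) ∈ cyclicSubspace W K := by
    intro y hdn hu t
    set u : Fin d → ℂ := ((A₁ (y - 1))ᴴ)⁻¹ *ᵥ Pi.single t 1 with hu_def
    have hv : svec e false (y - 1) (B₂ y *ᵥ u) + svec e true y (A₂ y *ᵥ u)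
        ∈ cyclicSubspace W K :=
      Submodule.add_mem _ (svec_mem e hdn _) (svec_mem e hu _)
    have hWv := hW'V _ hv
    rw [con3 y u] at hWv
    have hA1u : (A₁ (y - 1))ᴴ *ᵥ u = Pi.single t 1 := by
      rw [hu_def, Matrix.mulVec_mulVec, Matrix.mul_nonsing_inv _ (hA1Hdet (y - 1)),
        Matrix.one_mulVec]
    rw [hA1u, svec_single] at hWv
    have hsub := Submodule.sub_mem _ hWv (svec_mem e hdn ((Bhat₁ (y - 1))ᴴ *ᵥ u))
    simpa using hsub
  -- base cell and induction over all cells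
  have base_u : ∀ r, e (x, true, r) ∈ cyclicSubspace W K := fun r => hKV (hKu r)
  have base_d : ∀ r, e (x, false, r) ∈ cyclicSubspace W K := by
    rcases hKd with h | h
    · exact fun r => hKV (h r)
    · exact S3 x (fun r => hKV (h r)) base_u
  have main : ∀ y : ℤ, (∀ r, e (y, true, r) ∈ cyclicSubspace W K) ∧
      (∀ r, e (y, false, r) ∈ cyclicSubspace W K) := by
    intro y
    induction y using Int.inductionOn' (b := x) with
    | zero => exact ⟨base_u, base_d⟩
    | succ k hk ih =>
      obtain ⟨ihu, ihd⟩ := ih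
      have hu' := S1 k ihu ihd
      have hd' : ∀ r, e (k + 1, false, r) ∈ cyclicSubspace W K := by
        have hdd : ∀ r, e (k + 1 - 1, false, r) ∈ cyclicSubspace W K := by
          intro r; rw [add_sub_cancel_right]; exact ihd r
        exact S3 (k + 1) hdd hu'
      exact ⟨hu', hd'⟩
    | pred k hk ih =>
      obtain ⟨ihu, ihd⟩ := ih
      have hd' := S2 k ihu ihd
      have hu' := S4 k hd' ihu
      exact ⟨hu', hd'⟩
  -- conclusion
  apply top_unique
  rw [← hspan]
  refine Submodule.topologicalClosure_minimal _ ?_ ?_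
  · rw [Submodule.span_le]
    rintro _ ⟨⟨y, b, r⟩, rfl⟩
    cases b
    · exact (main y).2 r
    · exact (main y).1 r
  · rw [hVS]; exact Submodule.isClosed_topologicalClosure _

end Statement15Aux



/-- For the generalized split-step walk `W = S_↓ C₂ S_↑ C₁` on
`ℓ²(ℤ) ⊗ ℂ^{2d}` with coins of block form `[[A_i, B̂_i],[B_i, A_i*]]` (with `A_i x`
invertible, `B_i x` hermitian, `B̂_i x = -A_i x · B_i x · (A_i x)⁻¹`,
`(A_i x)ᴴ A_i x + (B_i x)² = 1`), every cell `H_x` and every shifted cell `H̃_x`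
is cyclic for `W`. -/
theorem statement15
    (hd : 0 < d)
    (e : ℤ × Bool × Fin d → H) (he : Orthonormal ℂ e)
    (hspan : (Submodule.span ℂ (Set.range e)).topologicalClosure = ⊤)
    (Sup Sdn C₁ C₂ : H →L[ℂ] H)
    (A₁ B₁ Bhat₁ A₂ B₂ Bhat₂ : ℤ → Matrix (Fin d) (Fin d) ℂ)
    (hA₁ : ∀ x, IsUnit (A₁ x)) (hA₂ : ∀ x, IsUnit (A₂ x))
    (hB₁ : ∀ x, (B₁ x).IsHermitian) (hB₂ : ∀ x, (B₂ x).IsHermitian)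
    (hBhat₁ : ∀ x, Bhat₁ x = -(A₁ x * B₁ x * (A₁ x)⁻¹))
    (hBhat₂ : ∀ x, Bhat₂ x = -(A₂ x * B₂ x * (A₂ x)⁻¹))
    (hnorm₁ : ∀ x, (A₁ x)ᴴ * A₁ x + B₁ x * B₁ x = 1)
    (hnorm₂ : ∀ x, (A₂ x)ᴴ * A₂ x + B₂ x * B₂ x = 1)
    (hSup_up : ∀ x r, Sup (e (x, true, r)) = e (x + 1, true, r))
    (hSup_dn : ∀ x r, Sup (e (x, false, r)) = e (x, false, r))
    (hSdn_up : ∀ x r, Sdn (e (x, true, r)) = e (x, true, r))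
    (hSdn_dn : ∀ x r, Sdn (e (x, false, r)) = e (x - 1, false, r))
    (hC₁u : ∀ x r, C₁ (e (x, true, r)) =
      (∑ s, A₁ x s r • e (x, true, s)) + ∑ s, B₁ x s r • e (x, false, s))
    (hC₁d : ∀ x r, C₁ (e (x, false, r)) =
      (∑ s, Bhat₁ x s r • e (x, true, s)) +
        ∑ s, (starRingEnd ℂ) (A₁ x r s) • e (x, false, s))
    (hC₂u : ∀ x r, C₂ (e (x, true, r)) =
      (∑ s, A₂ x s r • e (x, true, s)) + ∑ s, B₂ x s r • e (x, false, s))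
    (hC₂d : ∀ x r, C₂ (e (x, false, r)) =
      (∑ s, Bhat₂ x s r • e (x, true, s)) +
        ∑ s, (starRingEnd ℂ) (A₂ x r s) • e (x, false, s)) :
    ∀ x : ℤ,
      cyclicSubspace (Sdn ∘L C₂ ∘L Sup ∘L C₁) (cell e x) = ⊤ ∧
      cyclicSubspace (Sdn ∘L C₂ ∘L Sup ∘L C₁) (tcell e x) = ⊤ := by
  intro x
  constructor
  · refine Statement15Aux.cyclic_core e he hspan Sup Sdn C₁ C₂ A₁ B₁ Bhat₁ A₂ B₂ Bhat₂
      hA₁ hA₂ hB₁ hB₂ hBhat₁ hBhat₂ hnorm₁ hnorm₂ hSup_up hSup_dn hSdn_up hSdn_dn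
      hC₁u hC₁d hC₂u hC₂d x (cell e x) ?_ (Or.inl ?_)
    · exact fun r => Submodule.subset_span ⟨(x, true, r), rfl, rfl⟩
    · exact fun r => Submodule.subset_span ⟨(x, false, r), rfl, rfl⟩
  · refine Statement15Aux.cyclic_core e he hspan Sup Sdn C₁ C₂ A₁ B₁ Bhat₁ A₂ B₂ Bhat₂
      hA₁ hA₂ hB₁ hB₂ hBhat₁ hBhat₂ hnorm₁ hnorm₂ hSup_up hSup_dn hSdn_up hSdn_dn
      hC₁u hC₁d hC₂u hC₂d x (tcell e x) ?_ (Or.inr ?_)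
    · exact fun r => Submodule.subset_span ⟨(x, true, r), Or.inr ⟨rfl, rfl⟩, rfl⟩
    · exact fun r => Submodule.subset_span ⟨(x - 1, false, r), Or.inl ⟨rfl, rfl⟩, rfl⟩
end
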